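/- arXiv:2212.08518 — 3 statements merged into one kernel-verified Lean document; each statement's English description precedes it below -/
import Mathlib

section
/- Let β < 0 and G(x) = αx with α ≥ 0. Then for every N ≥ 1, every control strategy φ ∈ Φ_N, and every solution of the controlled particle system, the expected number of particles surviving forever satisfies E[S^{φ,N}_∞] < −2/β, where S^{φ,N}_∞ := #{1 ≤ i ≤ N : τ^{φ,N}_i = ∞}. In particular sup_{φ∈Φ_N} E[S^{φ,N}_∞] < −2/β for all N ≥ 1. -/
open MeasureTheory ProbabilityTheory Filter Set
open scoped ENNReal NNReal Classical

noncomputable section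

/-- The first hitting time of `(-∞, 0]` by the path `x` after time `0`,
with value `∞` if the path never hits `(-∞, 0]`. -/
def hitTime (x : ℝ → ℝ) : ℝ≥0∞ :=
  ⨅ s ∈ {s : ℝ | 0 ≤ s ∧ x s ≤ 0}, ENNReal.ofReal s

/-- Membership in the set `𝕄` of càdlàg non-decreasing functions `ℓ : [-1, ∞) → ℝ`
(encoded as functions on `ℝ`) which vanish on `[-1, 0)` and satisfy `lim_{t → ∞} ℓ t ≤ 1`
(equivalently, `ℓ ≤ 1` everywhere, by monotonicity). -/
structure MemM (ℓ : ℝ → ℝ) : Prop where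
  zero_on_neg : ∀ t : ℝ, -1 ≤ t → t < 0 → ℓ t = 0
  mono : MonotoneOn ℓ (Set.Ici (-1 : ℝ))
  right_cont : ∀ t : ℝ, -1 ≤ t → ContinuousWithinAt ℓ (Set.Ici t) t
  le_one : ∀ t : ℝ, -1 ≤ t → ℓ t ≤ 1

/-- The Lévy distance `d` on `𝕄`. -/
def levyDist (ℓ ℓ' : ℝ → ℝ) : ℝ :=
  sInf {ε : ℝ | 0 < ε ∧ ∀ t : ℝ, 0 ≤ t → ℓ' t ≤ ℓ (t + ε) + ε ∧ ℓ (t - ε) - ε ≤ ℓ' t}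

/-- The path `ℓ` stopped at time `t`. -/
def stopAt (ℓ : ℝ → ℝ) (t : ℝ) : ℝ → ℝ := fun s => ℓ (min t s)

/-- The metric `d̂(ℓ, ℓ') = ∫₀^∞ e^{-s} (d(ℓ_{s∧·}, ℓ'_{s∧·}) ∧ 1) ds` on `𝕄`. -/
def dHat (ℓ ℓ' : ℝ → ℝ) : ℝ :=
  ∫ s in Set.Ioi (0 : ℝ), Real.exp (-s) * min (levyDist (stopAt ℓ s) (stopAt ℓ' s)) 1

/-- A process `B : ℝ → Ω → ℝ` (considered for times `t ≥ 0`) is a standard Brownian motion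
under `P`: it starts at `0`, has a.s. continuous paths, independent increments, and Gaussian
increments `B t - B s ~ N(0, t - s)`. -/
structure IsStandardBM {Ω : Type*} [MeasurableSpace Ω] (P : Measure Ω) (B : ℝ → Ω → ℝ) :
    Prop where
  meas : ∀ t : ℝ, Measurable (B t)
  init : ∀ᵐ ω ∂P, B 0 ω = 0
  cont : ∀ᵐ ω ∂P, ContinuousOn (fun t => B t ω) (Set.Ici (0 : ℝ))
  incr_law : ∀ s t : ℝ, 0 ≤ s → s ≤ t →
    P.map (fun ω => B t ω - B s ω) = gaussianReal 0 (Real.toNNReal (t - s))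
  indep_incr : ∀ (n : ℕ) (τ : Fin (n + 1) → ℝ), Monotone τ → (∀ i, 0 ≤ τ i) →
    iIndepFun (m := fun _ => inferInstance)
      (fun i : Fin n => fun ω => B (τ i.succ) ω - B (τ i.castSucc) ω) P

/-- The filtration generated by the family of Brownian motions `B i`, evaluated at time `t`. -/
def bmFiltration {Ω ι : Type*} [MeasurableSpace Ω] (B : ι → ℝ → Ω → ℝ) (t : ℝ) :
    MeasurableSpace Ω :=
  ⨆ (i : ι) (s : ℝ) (_ : 0 ≤ s) (_ : s ≤ t), MeasurableSpace.comap (B i s) inferInstance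

/-- Set-up of the `N`-particle system: i.i.d. initial conditions `Z i` with common law `θ`
(supported on `[0,∞)`), independent standard Brownian motions `B i`, with the pairs
`(Z i, B i)` mutually independent and `Z i` independent of `B i`. -/
structure ParticleSetup (N : ℕ) {Ω : Type*} [MeasurableSpace Ω] (P : Measure Ω)
    (θ : Measure ℝ) (Z : Fin N → Ω → ℝ) (B : Fin N → ℝ → Ω → ℝ) : Prop where
  isProb : IsProbabilityMeasure P
  z_meas : ∀ i, Measurable (Z i)
  z_law : ∀ i, P.map (Z i) = θ
  z_nonneg : ∀ i, ∀ᵐ ω ∂P, 0 ≤ Z i ω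
  bm : ∀ i, IsStandardBM P (B i)
  indep_pairs : iIndepFun (m := fun _ : Fin N => (inferInstance : MeasurableSpace (ℝ × (ℝ → ℝ))))
    (fun i => fun ω => (Z i ω, fun t => B i t ω)) P
  indep_zb : ∀ i, IndepFun (Z i) (fun ω => (fun t => B i t ω) : Ω → ℝ → ℝ) P

/-- `(X, L)` is a solution of the interacting particle system
`X^i_t = Z^i + β t + B^i_t − G(L_t)`, `L_t = (1/N) ∑_i 1{τ_i ≤ t}`. -/
structure IsParticleSolution (N : ℕ) (β : ℝ) (G : ℝ → ℝ) {Ω : Type*} [MeasurableSpace Ω]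
    (P : Measure Ω) (Z : Fin N → Ω → ℝ) (B : Fin N → ℝ → Ω → ℝ)
    (X : Fin N → ℝ → Ω → ℝ) (L : Ω → ℝ → ℝ) : Prop where
  memM : ∀ᵐ ω ∂P, MemM (L ω)
  adapted : ∀ t : ℝ, 0 ≤ t → Measurable[bmFiltration B t] (fun ω => L ω t)
  eqX : ∀ᵐ ω ∂P, ∀ i, ∀ t : ℝ, 0 ≤ t →
    X i t ω = Z i ω + β * t + B i t ω - G (L ω t)
  eqL : ∀ᵐ ω ∂P, ∀ t : ℝ, 0 ≤ t →
    L ω t = (N : ℝ)⁻¹ *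
      (Finset.univ.filter fun i : Fin N =>
        hitTime (fun s => X i s ω) ≤ ENNReal.ofReal t).card

/-- Set-up for the McKean–Vlasov equation: an initial condition `Z ≥ 0` with law `θ` and an
independent standard Brownian motion `B`. -/
structure MVSetup {Ω : Type*} [MeasurableSpace Ω] (P : Measure Ω) (θ : Measure ℝ)
    (Z : Ω → ℝ) (B : ℝ → Ω → ℝ) : Prop where
  isProb : IsProbabilityMeasure P
  z_meas : Measurable Z
  z_law : P.map Z = θ
  z_nonneg : ∀ᵐ ω ∂P, 0 ≤ Z ω
  bm : IsStandardBM P B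
  indep : IndepFun Z (fun ω => (fun t => B t ω) : Ω → ℝ → ℝ) P

/-- `(X, Λ)` is a solution of the McKean–Vlasov equation
`X_t = Z + β t + B_t − G(Λ_t)`, `Λ_t = P(τ ≤ t)` with `τ = inf{t ≥ 0 : X_t ≤ 0}`. -/
structure IsMVSolution (β : ℝ) (G : ℝ → ℝ) {Ω : Type*} [MeasurableSpace Ω] (P : Measure Ω)
    (Z : Ω → ℝ) (B : ℝ → Ω → ℝ) (X : ℝ → Ω → ℝ) (Λ : ℝ → ℝ) : Prop where
  memM : MemM Λ
  eqX : ∀ᵐ ω ∂P, ∀ t : ℝ, 0 ≤ t → X t ω = Z ω + β * t + B t ω - G (Λ t)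
  eqΛ : ∀ t : ℝ, 0 ≤ t →
    Λ t = (P {ω | hitTime (fun s => X s ω) ≤ ENNReal.ofReal t}).toReal


/-- A strategy: an adapted (progressively measurable) process `φ` with values in `[0,1]^N`
whose coordinates sum to at most `1` (the unit budget). -/
structure IsStrategy (N : ℕ) {Ω : Type*} [MeasurableSpace Ω] (B : Fin N → ℝ → Ω → ℝ)
    (φ : Fin N → ℝ → Ω → ℝ) : Prop where
  adapted : ∀ (i : Fin N) (t : ℝ), 0 ≤ t → Measurable[bmFiltration B t] (φ i t)
  jointly_meas : ∀ i : Fin N, Measurable (Function.uncurry (φ i))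
  mem_Icc : ∀ (i : Fin N) (t : ℝ) (ω : Ω), 0 ≤ t → φ i t ω ∈ Set.Icc (0 : ℝ) 1
  budget : ∀ (t : ℝ) (ω : Ω), 0 ≤ t → ∑ i : Fin N, φ i t ω ≤ 1

/-- `(X, L)` is a solution of the controlled particle system
`X^i_t = Z^i + ∫₀^t (β + φ^i_s) ds + B^i_t − G(L_t)`, `L_t = (1/N) ∑_i 1{τ_i ≤ t}`. -/
structure IsControlledSolution (N : ℕ) (β : ℝ) (G : ℝ → ℝ) {Ω : Type*} [MeasurableSpace Ω]
    (P : Measure Ω) (Z : Fin N → Ω → ℝ) (B : Fin N → ℝ → Ω → ℝ) (φ : Fin N → ℝ → Ω → ℝ)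
    (X : Fin N → ℝ → Ω → ℝ) (L : Ω → ℝ → ℝ) : Prop where
  memM : ∀ᵐ ω ∂P, MemM (L ω)
  adapted : ∀ t : ℝ, 0 ≤ t → Measurable[bmFiltration B t] (fun ω => L ω t)
  eqX : ∀ᵐ ω ∂P, ∀ i : Fin N, ∀ t : ℝ, 0 ≤ t →
    X i t ω = Z i ω + (β * t + ∫ s in Set.Ioc (0 : ℝ) t, φ i s ω) + B i t ω - G (L ω t)
  eqL : ∀ᵐ ω ∂P, ∀ t : ℝ, 0 ≤ t →
    L ω t = (N : ℝ)⁻¹ *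
      (Finset.univ.filter fun i : Fin N =>
        hitTime (fun s => X i s ω) ≤ ENNReal.ofReal t).card

/-!
Let `S` be the set of particles that never hit `0`. Summing `X^i_n > 0` over `i ∈ S`, the
contagion term `a L_n` is nonnegative and the budget caps the total control spent by time `n`
at `n`, so `∑_{i ∈ S} (Z^i + B^i_n) ≥ -(|S| β + 1) n` for every `n`. By the strong law of large
numbers applied to the unit increments, `B^i_n / n → 0` almost surely, hence `|S| ≤ -1/β`
almost surely, and the expectation is at most `-1/β < -2/β`.
-/

open scoped Topology

lemma pos_of_hitTime_eq_top {x : ℝ → ℝ} (h : hitTime x = ⊤) {s : ℝ} (hs : 0 ≤ s) : 0 < x s := by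
  by_contra! hle
  have hhit : hitTime x ≤ ENNReal.ofReal s := iInf₂_le s ⟨hs, hle⟩
  rw [h, top_le_iff] at hhit
  exact ENNReal.ofReal_ne_top hhit

lemma MemM.nonneg {ℓ : ℝ → ℝ} (hℓ : MemM ℓ) {t : ℝ} (ht : 0 ≤ t) : 0 ≤ ℓ t := by
  rw [← hℓ.zero_on_neg (-1) le_rfl (by norm_num)]
  exact hℓ.mono (mem_Ici.2 le_rfl) (mem_Ici.2 (by linarith)) (by linarith)

namespace IsStrategy

variable {N : ℕ} {Ω : Type*} [MeasurableSpace Ω] {B φ : Fin N → ℝ → Ω → ℝ}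

lemma integrableOn (hφ : IsStrategy N B φ) (i : Fin N) (ω : Ω) (t : ℝ) :
    IntegrableOn (fun s => φ i s ω) (Ioc 0 t) := by
  have hmeas : Measurable fun s => φ i s ω :=
    (hφ.jointly_meas i).comp (measurable_id.prodMk measurable_const)
  refine Integrable.mono' (integrable_const (1 : ℝ)) hmeas.aestronglyMeasurable ?_
  filter_upwards [ae_restrict_mem measurableSet_Ioc] with s hs
  obtain ⟨h0, h1⟩ := hφ.mem_Icc i s ω hs.1.le
  rw [Real.norm_eq_abs, abs_le]
  exact ⟨by linarith, h1⟩

lemma sum_setIntegral_le (hφ : IsStrategy N B φ) (S : Finset (Fin N)) (ω : Ω) {t : ℝ}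
    (ht : 0 ≤ t) : ∑ i ∈ S, ∫ s in Ioc 0 t, φ i s ω ≤ t :=
  calc ∑ i ∈ S, ∫ s in Ioc 0 t, φ i s ω
      ≤ ∑ i, ∫ s in Ioc 0 t, φ i s ω :=
        Finset.sum_le_sum_of_subset_of_nonneg S.subset_univ fun i _ _ =>
          setIntegral_nonneg measurableSet_Ioc fun s hs => (hφ.mem_Icc i s ω hs.1.le).1
    _ = ∫ s in Ioc 0 t, ∑ i, φ i s ω :=
        (integral_finsetSum _ fun i _ => hφ.integrableOn i ω t).symm
    _ ≤ ∫ s in Ioc 0 t, (1 : ℝ) :=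
        setIntegral_mono_on (integrable_finsetSum _ fun i _ => hφ.integrableOn i ω t)
          (integrableOn_const measure_Ioc_lt_top.ne) measurableSet_Ioc
          fun s hs => hφ.budget s ω hs.1.le
    _ = t := by simp [ht]

end IsStrategy

namespace IsStandardBM

variable {Ω : Type*} [MeasurableSpace Ω] {P : Measure Ω} {B : ℝ → Ω → ℝ}

lemma identDistrib_increment (hB : IsStandardBM P B) (k : ℕ) :
    IdentDistrib (fun ω => B (k + 1) ω - B k ω) id P (gaussianReal 0 1) where
  aemeasurable_fst := ((hB.meas _).sub (hB.meas _)).aemeasurable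
  aemeasurable_snd := aemeasurable_id
  map_eq := by
    rw [Measure.map_id, hB.incr_law k (k + 1) k.cast_nonneg (by linarith)]
    norm_num

lemma pairwise_indepFun_increment (hB : IsStandardBM P B) :
    Pairwise (Function.onFun (IndepFun · · P) fun (k : ℕ) ω => B (k + 1) ω - B k ω) := by
  intro j k hjk
  have hτ : Monotone fun m : Fin (max j k + 2) => ((m : ℕ) : ℝ) :=
    fun _ _ hmn => Nat.cast_le.2 hmn
  have hindep := hB.indep_incr _ _ hτ fun m => Nat.cast_nonneg _
  simpa using hindep.indepFun (i := ⟨j, by omega⟩) (j := ⟨k, by omega⟩) (by simpa using hjk)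

lemma ae_tendsto_div_nat (hB : IsStandardBM P B) :
    ∀ᵐ ω ∂P, Tendsto (fun n : ℕ => B n ω / n) atTop (𝓝 0) := by
  have hident := hB.identDistrib_increment
  have hslln := strong_law_ae_real _
    ((hident 0).integrable_iff.2 ((memLp_id_gaussianReal 1).integrable le_rfl))
    hB.pairwise_indepFun_increment fun k => (hident k).trans (hident 0).symm
  have hmean : ∫ ω, B ((0 : ℕ) + 1) ω - B (0 : ℕ) ω ∂P = 0 :=
    (hident 0).integral_eq.trans integral_id_gaussianReal
  filter_upwards [hslln, hB.init] with ω hω h0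
  have htelescope (n : ℕ) : ∑ k ∈ Finset.range n, (B (k + 1) ω - B k ω) = B n ω := by
    simpa [h0] using Finset.sum_range_sub (fun k : ℕ => B k ω) n
  simpa only [htelescope, hmean] using hω

end IsStandardBM

lemma nonpos_of_mul_le_of_tendsto_div {c : ℝ} {u : ℕ → ℝ} (h : ∀ n : ℕ, c * n ≤ u n)
    (hu : Tendsto (fun n : ℕ => u n / n) atTop (𝓝 0)) : c ≤ 0 :=
  ge_of_tendsto hu <| (eventually_gt_atTop 0).mono fun n hn => by
    rw [le_div_iff₀ (Nat.cast_pos.2 hn)]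
    exact h n

lemma card_mul_neg_le_one_of_survival {ι : Type*} (S : Finset ι) {β a : ℝ} (ha : 0 ≤ a)
    {z : ι → ℝ} {b I : ι → ℕ → ℝ} {ℓ : ℕ → ℝ} (hℓ : ∀ n, 0 ≤ ℓ n)
    (hI : ∀ n : ℕ, ∑ i ∈ S, I i n ≤ n)
    (hpos : ∀ i ∈ S, ∀ n : ℕ, 0 < z i + (β * n + I i n) + b i n - a * ℓ n)
    (hb : ∀ i ∈ S, Tendsto (fun n : ℕ => b i n / n) atTop (𝓝 0)) :
    (S.card : ℝ) * -β ≤ 1 := by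
  have hlower (n : ℕ) : (S.card * -β - 1) * n ≤ ∑ i ∈ S, (z i + b i n) := by
    have hsum : ∑ i ∈ S, (a * ℓ n - β * n - I i n) ≤ ∑ i ∈ S, (z i + b i n) :=
      Finset.sum_le_sum fun i hi => by linarith [hpos i hi n]
    rw [Finset.sum_sub_distrib, Finset.sum_sub_distrib, Finset.sum_const, Finset.sum_const,
      nsmul_eq_mul, nsmul_eq_mul] at hsum
    have := mul_nonneg (Nat.cast_nonneg S.card) (mul_nonneg ha (hℓ n))
    linarith [hI n]
  have hlim : Tendsto (fun n : ℕ => (∑ i ∈ S, (z i + b i n)) / n) atTop (𝓝 0) := by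
    simpa [Finset.sum_div, add_div] using tendsto_finsetSum S fun i hi =>
      (tendsto_const_div_atTop_nhds_zero_nat (z i)).add (hb i hi)
  linarith [nonpos_of_mul_le_of_tendsto_div hlower hlim]

lemma integral_le_of_ae_le {Ω : Type*} [MeasurableSpace Ω] {P : Measure Ω}
    [IsProbabilityMeasure P] {f : Ω → ℝ} {c : ℝ} (hc : 0 ≤ c) (h : ∀ᵐ ω ∂P, f ω ≤ c) :
    ∫ ω, f ω ∂P ≤ c := by
  by_cases hf : Integrable f P
  · simpa using integral_mono_ae hf (integrable_const c) h
  · rw [integral_undef hf]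
    exact hc

theorem stmt4_general (β : ℝ) (hβ : β < 0) (a : ℝ) (ha : 0 ≤ a)
    {Ω : Type*} [MeasurableSpace Ω]
    (N : ℕ) (P : Measure Ω) (θ : Measure ℝ)
    (Z : Fin N → Ω → ℝ) (B : Fin N → ℝ → Ω → ℝ)
    (hsetup : ParticleSetup N P θ Z B)
    (φ : Fin N → ℝ → Ω → ℝ) (hφ : IsStrategy N B φ)
    (X : Fin N → ℝ → Ω → ℝ) (L : Ω → ℝ → ℝ)
    (hsol : IsControlledSolution N β (fun x => a * x) P Z B φ X L) :
    ∫ ω, ((Finset.univ.filter fun i : Fin N =>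
        hitTime (fun s => X i s ω) = ⊤).card : ℝ) ∂P < -2 / β := by
  have := hsetup.isProb
  have hslln := ae_all_iff.2 fun i => (hsetup.bm i).ae_tendsto_div_nat
  have hsurvivors : ∀ᵐ ω ∂P,
      ((Finset.univ.filter fun i : Fin N => hitTime (fun s => X i s ω) = ⊤).card : ℝ)
        ≤ -1 / β := by
    filter_upwards [hsol.eqX, hsol.memM, hslln] with ω hX hL hB
    have hcard := card_mul_neg_le_one_of_survival
      (Finset.univ.filter fun i : Fin N => hitTime (fun s => X i s ω) = ⊤) ha
      (z := fun i => Z i ω) (ℓ := fun n : ℕ => L ω n)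
      (fun n => hL.nonneg n.cast_nonneg) (fun n => hφ.sum_setIntegral_le _ ω n.cast_nonneg)
      (fun i hi n => by
        have hXpos := pos_of_hitTime_eq_top (Finset.mem_filter.1 hi).2 n.cast_nonneg
        rwa [hX i n n.cast_nonneg] at hXpos)
      fun i _ => hB i
    rw [le_div_iff_of_neg hβ]
    linarith
  calc _ ≤ -1 / β := integral_le_of_ae_le (div_nonneg_of_nonpos (by norm_num) hβ.le) hsurvivors
    _ < -2 / β := (div_lt_div_right_of_neg hβ).2 (by norm_num)

/-- Theorem 2.5 (i): in a negative economy `β < 0`, for any budget-control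
strategy and any solution of the controlled particle system, the expected number of particles
surviving forever is less than `-2/β`. -/
theorem stmt4 (β : ℝ) (hβ : β < 0) (a : ℝ) (ha : 0 ≤ a)
    {Ω : Type*} [MeasurableSpace Ω]
    (N : ℕ) (hN : 1 ≤ N) (P : Measure Ω) (θ : Measure ℝ)
    (Z : Fin N → Ω → ℝ) (B : Fin N → ℝ → Ω → ℝ)
    (hsetup : ParticleSetup N P θ Z B)
    (φ : Fin N → ℝ → Ω → ℝ) (hφ : IsStrategy N B φ)
    (X : Fin N → ℝ → Ω → ℝ) (L : Ω → ℝ → ℝ)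
    (hsol : IsControlledSolution N β (fun x => a * x) P Z B φ X L) :
    ∫ ω, ((Finset.univ.filter fun i : Fin N =>
        hitTime (fun s => X i s ω) = ⊤).card : ℝ) ∂P < -2 / β :=
  stmt4_general β hβ a ha N P θ Z B hsetup φ hφ X L hsol

end
end

section
/- The embedding ι : (Ξ, d_u ⊗ d̂) → (𝒟, d_m) defined by ι(f, ℓ) := f − G(ℓ) is continuous, where Ξ := 𝒞 × 𝕄 carries the product topology of compact (locally uniform) convergence on 𝒞 and the metric d̂ on 𝕄, and 𝒟 carries the Skorokhod M1 topology. -/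
open MeasureTheory ProbabilityTheory Filter Set
open scoped ENNReal NNReal Classical

noncomputable section

/-- The left-limit value used in the completed graph of a càdlàg path on `[a, ∞)`
(at the left endpoint `a` we use the value itself). -/
def leftVal (a : ℝ) (x : ℝ → ℝ) (t : ℝ) : ℝ :=
  if t = a then x a else Function.leftLim x t

/-- The completed graph of a càdlàg path `x` over `[a, b]`: the graph together with the
vertical segments joining `x(t-)` and `x(t)` at jump times. -/
def cGraph (a b : ℝ) (x : ℝ → ℝ) : Set (ℝ × ℝ) :=
  {p | p.2 ∈ Set.Icc a b ∧ p.1 ∈ segment ℝ (leftVal a x p.2) (x p.2)}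

/-- The (M1) order on the completed graph: points are compared first by time, and within a
jump segment by distance to the left-limit value. -/
def graphLE (a : ℝ) (x : ℝ → ℝ) (p q : ℝ × ℝ) : Prop :=
  p.2 < q.2 ∨ (p.2 = q.2 ∧ |p.1 - leftVal a x p.2| ≤ |q.1 - leftVal a x q.2|)

/-- `(u, r)` is a parametric representation of the completed graph of `x` over `[a, b]`:
a continuous non-decreasing (for the graph order) map from `[0,1]` onto the completed graph. -/
structure IsParamRep (a b : ℝ) (x : ℝ → ℝ) (u r : ℝ → ℝ) : Prop where
  cont_u : ContinuousOn u (Set.Icc 0 1)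
  cont_r : ContinuousOn r (Set.Icc 0 1)
  mono : ∀ s s' : ℝ, s ∈ Set.Icc (0 : ℝ) 1 → s' ∈ Set.Icc (0 : ℝ) 1 → s ≤ s' →
    graphLE a x (u s, r s) (u s', r s')
  surj : (fun s => (u s, r s)) '' Set.Icc (0 : ℝ) 1 = cGraph a b x

/-- The Skorokhod M1 distance between càdlàg paths restricted to `[a, b]`. -/
def m1DistOn (a b : ℝ) (x y : ℝ → ℝ) : ℝ :=
  sInf {c : ℝ | ∃ u₁ r₁ u₂ r₂ : ℝ → ℝ,
    IsParamRep a b x u₁ r₁ ∧ IsParamRep a b y u₂ r₂ ∧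
    ∀ s ∈ Set.Icc (0 : ℝ) 1, |u₁ s - u₂ s| ≤ c ∧ |r₁ s - r₂ s| ≤ c}

/-- A metric `d_m` for the Skorokhod M1 topology on càdlàg paths on `[-1, ∞)`. -/
def m1Dist (x y : ℝ → ℝ) : ℝ :=
  ∫ t in Set.Ioi (0 : ℝ), Real.exp (-t) * min (m1DistOn (-1) t x y) 1

/-!
The completed graph of `ℓ ∈ 𝕄` over `[-1, T]` is parametrized by the level `c` of the strictly
increasing map `s ↦ s + ℓ s`; this parametrization is `1`-Lipschitz in `c`, and composing it with
`f` and the monotone `G` parametrizes the completed graph of `f - G ∘ ℓ`. If `ℓ'` and `ℓ` are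
`ε`-close in the Lévy metric on `[-1, T + 1]` and `ℓ` barely moves on `[T - 2ε, T + 2ε]`, the two
parametrizations are uniformly close at equal parameters, which bounds the M1 distance on
`[-1, T]` through the moduli of continuity of `f` and `G`. A small `d̂(ℓ', ℓ)` makes the stopped
Lévy distances small at most times (Markov's inequality), and the bounded monotone `ℓ` oscillates
little at most times; integrating over `T` against `e^{-T}` gives the claim.
-/

open Function Topology

/-- A path in `𝕄` is only constrained on `[-1, ∞)`; freezing it at `-1` makes it monotone on `ℝ`. -/
def extendLeft (ℓ : ℝ → ℝ) (t : ℝ) : ℝ := ℓ (max t (-1))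

lemma extendLeft_of_le {ℓ : ℝ → ℝ} {t : ℝ} (ht : -1 ≤ t) : extendLeft ℓ t = ℓ t := by
  rw [extendLeft, max_eq_left ht]

namespace MemM

variable {ℓ : ℝ → ℝ}

lemma apply_le_apply (h : MemM ℓ) {s t : ℝ} (hs : -1 ≤ s) (hst : s ≤ t) : ℓ s ≤ ℓ t :=
  h.mono hs (hs.trans hst) hst

lemma nonneg_s10 (h : MemM ℓ) {t : ℝ} (ht : -1 ≤ t) : 0 ≤ ℓ t :=
  h.zero_on_neg (-1) le_rfl (by norm_num) ▸ h.apply_le_apply le_rfl ht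

lemma monotone_extendLeft (h : MemM ℓ) : Monotone (extendLeft ℓ) := fun _ _ hst =>
  h.apply_le_apply (le_max_right _ _) (max_le_max hst le_rfl)

lemma extendLeft_nonneg (h : MemM ℓ) (t : ℝ) : 0 ≤ extendLeft ℓ t :=
  h.nonneg_s10 (le_max_right _ _)

lemma extendLeft_le_one (h : MemM ℓ) (t : ℝ) : extendLeft ℓ t ≤ 1 :=
  h.le_one _ (le_max_right _ _)

lemma extendLeft_mem_Icc (h : MemM ℓ) (t : ℝ) : extendLeft ℓ t ∈ Icc (0 : ℝ) 1 :=
  ⟨h.extendLeft_nonneg t, h.extendLeft_le_one t⟩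

lemma extendLeft_of_neg (h : MemM ℓ) {t : ℝ} (ht : t < 0) : extendLeft ℓ t = 0 :=
  h.zero_on_neg _ (le_max_right _ _) (max_lt ht (by norm_num))

lemma continuousWithinAt_extendLeft (h : MemM ℓ) {t : ℝ} (ht : -1 ≤ t) :
    ContinuousWithinAt (extendLeft ℓ) (Ici t) t :=
  (h.right_cont t ht).congr (fun _ hs => extendLeft_of_le (ht.trans hs)) (extendLeft_of_le ht)

lemma extendLeft_le_leftVal (h : MemM ℓ) {s t : ℝ} (hst : s < t) :
    extendLeft ℓ s ≤ leftVal (-1) (extendLeft ℓ) t := by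
  unfold leftVal
  split_ifs with ht
  · subst ht
    rw [extendLeft, extendLeft, max_eq_right hst.le, max_self]
  · exact h.monotone_extendLeft.le_leftLim hst

lemma leftVal_le_extendLeft (h : MemM ℓ) (t : ℝ) :
    leftVal (-1) (extendLeft ℓ) t ≤ extendLeft ℓ t := by
  unfold leftVal
  split_ifs with ht
  · rw [ht]
  · exact h.monotone_extendLeft.leftLim_le le_rfl

lemma leftVal_mem_Icc (h : MemM ℓ) (t : ℝ) :
    leftVal (-1) (extendLeft ℓ) t ∈ Icc (0 : ℝ) 1 :=
  ⟨(h.extendLeft_nonneg _).trans (h.extendLeft_le_leftVal (sub_one_lt t)),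
    (h.leftVal_le_extendLeft t).trans (h.extendLeft_le_one t)⟩

end MemM

section GraphParam

variable {ℓ m : ℝ → ℝ} {T : ℝ}

def graphLevel (ℓ : ℝ → ℝ) (T c : ℝ) : ℝ := max (-1) (min c (T + ℓ T))

/-- The generalized inverse of the strictly increasing map `s ↦ s + ℓ s` on `[-1, T]`, evaluated
at `c` clamped to its range `[-1, T + ℓ T]`. Together with `graphValue`, it runs through the
completed graph of `ℓ` over `[-1, T]` as the level `c` increases. -/
def graphTime (ℓ : ℝ → ℝ) (T c : ℝ) : ℝ :=
  sInf {s | s ∈ Icc (-1) T ∧ graphLevel ℓ T c ≤ s + extendLeft ℓ s}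

def graphValue (ℓ : ℝ → ℝ) (T c : ℝ) : ℝ := graphLevel ℓ T c - graphTime ℓ T c

lemma neg_one_le_graphLevel (c : ℝ) : -1 ≤ graphLevel ℓ T c := le_max_left _ _

lemma graphLevel_mono {c c' : ℝ} (hc : c ≤ c') : graphLevel ℓ T c ≤ graphLevel ℓ T c' :=
  max_le_max le_rfl (min_le_min hc le_rfl)

lemma lipschitzWith_graphLevel : LipschitzWith 1 (graphLevel ℓ T) :=
  (LipschitzWith.id.min_const _).const_max _

lemma abs_graphLevel_sub_graphLevel_le (c : ℝ) :
    |graphLevel ℓ T c - graphLevel m T c| ≤ |ℓ T - m T| := by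
  rw [graphLevel, graphLevel, max_comm, max_comm (-1)]
  refine (abs_max_sub_max_le_abs _ _ _).trans <| (abs_min_sub_min_le_max _ _ _ _).trans ?_
  simp

lemma graphLevel_eq {c : ℝ} (h₁ : -1 ≤ c) (h₂ : c ≤ T + ℓ T) : graphLevel ℓ T c = c := by
  rw [graphLevel, min_eq_left h₂, max_eq_right h₁]

lemma graphTime_le {c s : ℝ} (hs : s ∈ Icc (-1) T) (hc : graphLevel ℓ T c ≤ s + extendLeft ℓ s) :
    graphTime ℓ T c ≤ s :=
  csInf_le ⟨-1, fun _ h => h.1.1⟩ ⟨hs, hc⟩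

lemma graphLevel_le (h : MemM ℓ) (hT : -1 ≤ T) (c : ℝ) :
    graphLevel ℓ T c ≤ T + extendLeft ℓ T := by
  rw [extendLeft_of_le hT]
  exact max_le (by linarith [h.nonneg_s10 hT]) (min_le_right _ _)

lemma le_graphTime (h : MemM ℓ) (hT : -1 ≤ T) {c a : ℝ}
    (H : ∀ s ∈ Icc (-1) T, graphLevel ℓ T c ≤ s + extendLeft ℓ s → a ≤ s) :
    a ≤ graphTime ℓ T c :=
  le_csInf ⟨T, ⟨hT, le_rfl⟩, graphLevel_le h hT c⟩ fun s hs => H s hs.1 hs.2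

lemma graphTime_mem_Icc (h : MemM ℓ) (hT : -1 ≤ T) (c : ℝ) : graphTime ℓ T c ∈ Icc (-1) T :=
  ⟨le_graphTime h hT fun _ hs _ => hs.1, graphTime_le ⟨hT, le_rfl⟩ (graphLevel_le h hT c)⟩

lemma add_extendLeft_lt_of_lt_graphTime (h : MemM ℓ) (hT : -1 ≤ T) {c s : ℝ} (hs : -1 ≤ s)
    (hsc : s < graphTime ℓ T c) : s + extendLeft ℓ s < graphLevel ℓ T c :=
  lt_of_not_ge fun hle =>
    hsc.not_ge (graphTime_le ⟨hs, hsc.le.trans (graphTime_mem_Icc h hT c).2⟩ hle)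

/-- The infimum defining `graphTime` is attained, by right-continuity of `ℓ`. -/
lemma graphLevel_le_graphTime_add (h : MemM ℓ) (hT : -1 ≤ T) (c : ℝ) :
    graphLevel ℓ T c ≤ graphTime ℓ T c + extendLeft ℓ (graphTime ℓ T c) := by
  set r := graphTime ℓ T c
  have hr := graphTime_mem_Icc h hT c
  by_contra! hlt
  have hcont : ContinuousWithinAt (fun s => s + extendLeft ℓ s) (Ici r) r :=
    continuousWithinAt_id.add (h.continuousWithinAt_extendLeft hr.1)
  obtain ⟨ε, hε, hball⟩ := Metric.mem_nhdsWithin_iff.1 (hcont.eventually_lt_const hlt)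
  obtain ⟨s, ⟨hsT, hs⟩, hsr⟩ := exists_lt_of_csInf_lt
    (s := {s | s ∈ Icc (-1) T ∧ graphLevel ℓ T c ≤ s + extendLeft ℓ s})
    ⟨T, ⟨hT, le_rfl⟩, graphLevel_le h hT c⟩ (lt_add_of_pos_right r hε)
  have hrs : r ≤ s := graphTime_le hsT hs
  refine (hball (show s ∈ Metric.ball r ε ∩ Ici r from ⟨?_, hrs⟩)).not_ge hs
  rw [Metric.mem_ball, Real.dist_eq, abs_of_nonneg (sub_nonneg.2 hrs)]
  linarith

lemma leftVal_le_graphValue (h : MemM ℓ) (hT : -1 ≤ T) (c : ℝ) :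
    leftVal (-1) (extendLeft ℓ) (graphTime ℓ T c) ≤ graphValue ℓ T c := by
  have hr := graphTime_mem_Icc h hT c
  rw [graphValue, leftVal]
  split_ifs with hr1
  · rw [hr1, extendLeft_of_le le_rfl, h.zero_on_neg (-1) le_rfl (by norm_num)]
    linarith [neg_one_le_graphLevel (ℓ := ℓ) (T := T) c]
  · have hr1 : -1 < graphTime ℓ T c := lt_of_le_of_ne hr.1 (Ne.symm hr1)
    refine le_of_tendsto_of_tendsto (h.monotone_extendLeft.tendsto_leftLim _)
      (((continuous_sub_left _).tendsto _).mono_left nhdsWithin_le_nhds)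
      (eventually_of_mem (Ioo_mem_nhdsLT hr1) fun s hs => ?_)
    linarith [add_extendLeft_lt_of_lt_graphTime h hT hs.1.le hs.2]

lemma graphValue_le_extendLeft (h : MemM ℓ) (hT : -1 ≤ T) (c : ℝ) :
    graphValue ℓ T c ≤ extendLeft ℓ (graphTime ℓ T c) := by
  rw [graphValue]
  linarith [graphLevel_le_graphTime_add h hT c]

lemma graphValue_mem_Icc (h : MemM ℓ) (hT : -1 ≤ T) (c : ℝ) : graphValue ℓ T c ∈ Icc (0 : ℝ) 1 :=
  ⟨(h.leftVal_mem_Icc _).1.trans (leftVal_le_graphValue h hT c),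
    (graphValue_le_extendLeft h hT c).trans (h.extendLeft_le_one _)⟩

lemma graphTime_mono (h : MemM ℓ) (hT : -1 ≤ T) : Monotone (graphTime ℓ T) := fun _ _ hc =>
  le_graphTime h hT fun _ hs hle => graphTime_le hs ((graphLevel_mono hc).trans hle)

lemma graphTime_le_add_graphLevel_sub (h : MemM ℓ) (hT : -1 ≤ T) {c c' : ℝ} (hc : c ≤ c') :
    graphTime ℓ T c' ≤ graphTime ℓ T c + (graphLevel ℓ T c' - graphLevel ℓ T c) := by
  set r := graphTime ℓ T c
  have hr := graphTime_mem_Icc h hT c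
  have hd : 0 ≤ graphLevel ℓ T c' - graphLevel ℓ T c := sub_nonneg.2 (graphLevel_mono hc)
  rcases le_total T (r + (graphLevel ℓ T c' - graphLevel ℓ T c)) with hle | hle
  · exact (graphTime_mem_Icc h hT c').2.trans hle
  · refine graphTime_le ⟨by linarith [hr.1], hle⟩ ?_
    have := h.monotone_extendLeft (le_add_of_nonneg_right hd : r ≤ _)
    linarith [graphLevel_le_graphTime_add h hT c]

lemma lipschitzWith_graphTime (h : MemM ℓ) (hT : -1 ≤ T) : LipschitzWith 1 (graphTime ℓ T) := by
  refine LipschitzWith.of_le_add fun c c' => ?_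
  rcases le_total c c' with hc | hc
  · linarith [graphTime_mono h hT hc, dist_nonneg (x := c) (y := c')]
  · have := (lipschitzWith_graphLevel (ℓ := ℓ) (T := T)).dist_le_mul c c'
    rw [NNReal.coe_one, one_mul, Real.dist_eq] at this
    linarith [graphTime_le_add_graphLevel_sub h hT hc,
      le_abs_self (graphLevel ℓ T c - graphLevel ℓ T c')]

/-- `graphTime` inverts `(t, v) ↦ t + v` on the completed graph of `ℓ`. -/
lemma graphTime_add_eq (h : MemM ℓ) (hT : -1 ≤ T) {t v : ℝ} (ht : t ∈ Icc (-1) T)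
    (hv : v ∈ Icc (leftVal (-1) (extendLeft ℓ) t) (extendLeft ℓ t)) :
    graphLevel ℓ T (t + v) = t + v ∧ graphTime ℓ T (t + v) = t := by
  have hv0 : 0 ≤ v := (h.leftVal_mem_Icc t).1.trans hv.1
  have hlevel : graphLevel ℓ T (t + v) = t + v :=
    graphLevel_eq (by linarith [ht.1]) (by
      linarith [h.monotone_extendLeft ht.2, hv.2, extendLeft_of_le (ℓ := ℓ) hT, ht.2])
  refine ⟨hlevel, le_antisymm (graphTime_le ht (by rw [hlevel]; linarith [hv.2])) ?_⟩
  refine le_graphTime h hT fun s hs hle => le_of_not_gt fun hst => ?_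
  rw [hlevel] at hle
  linarith [h.extendLeft_le_leftVal hst, hv.1]

end GraphParam

section Comparison

variable {ℓ m : ℝ → ℝ} {T ε δ : ℝ}

def LevyBelowOn (T ε : ℝ) (m ℓ : ℝ → ℝ) : Prop :=
  ∀ t ∈ Icc (-1) T, extendLeft m t ≤ extendLeft ℓ (t + ε) + ε

lemma graphTime_le_graphTime_add_of_levyBelowOn (hℓ : MemM ℓ) (hm : MemM m) (hT : -1 ≤ T)
    (hε : 0 ≤ ε) (hmℓ : LevyBelowOn T ε m ℓ) (hδ : |ℓ T - m T| ≤ δ) (c : ℝ) :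
    graphTime ℓ T c ≤ graphTime m T c + (ε + δ) := by
  set r := graphTime m T c
  have hr := graphTime_mem_Icc hm hT c
  have hδ0 : 0 ≤ δ := (abs_nonneg _).trans hδ
  rcases le_total T (r + (ε + δ)) with hle | hle
  · exact (graphTime_mem_Icc hℓ hT c).2.trans hle
  · refine graphTime_le ⟨by linarith [hr.1], hle⟩ ?_
    have hlevel := (abs_le.1 ((abs_graphLevel_sub_graphLevel_le (ℓ := ℓ) (m := m) c).trans hδ)).2
    have hshift := hℓ.monotone_extendLeft (by linarith : r + ε ≤ r + (ε + δ))
    linarith [graphLevel_le_graphTime_add hm hT c, hmℓ r hr]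

def graphParam (ℓ : ℝ → ℝ) (T θ : ℝ) : ℝ := -1 + θ * (T + 1 + ℓ T)

def paramTime (ℓ : ℝ → ℝ) (T θ : ℝ) : ℝ := graphTime ℓ T (graphParam ℓ T θ)

def paramValue (ℓ : ℝ → ℝ) (T θ : ℝ) : ℝ := graphValue ℓ T (graphParam ℓ T θ)

lemma abs_graphParam_sub_le (hδ : |m T - ℓ T| ≤ δ) {θ : ℝ} (hθ : θ ∈ Icc (0 : ℝ) 1) :
    |graphParam m T θ - graphParam ℓ T θ| ≤ δ := by
  rw [graphParam, graphParam, show -1 + θ * (T + 1 + m T) - (-1 + θ * (T + 1 + ℓ T)) =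
    θ * (m T - ℓ T) by ring, abs_mul, abs_of_nonneg hθ.1]
  exact (mul_le_of_le_one_left (abs_nonneg _) hθ.2).trans hδ

lemma abs_paramTime_sub_le (hℓ : MemM ℓ) (hm : MemM m) (hT : -1 ≤ T) (hε : 0 ≤ ε)
    (hmℓ : LevyBelowOn T ε m ℓ) (hℓm : LevyBelowOn T ε ℓ m) (hδ : |m T - ℓ T| ≤ δ)
    {θ : ℝ} (hθ : θ ∈ Icc (0 : ℝ) 1) :
    |paramTime m T θ - paramTime ℓ T θ| ≤ ε + 2 * δ := by
  have hlip := (lipschitzWith_graphTime hm hT).dist_le_mul (graphParam m T θ) (graphParam ℓ T θ)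
  rw [NNReal.coe_one, one_mul, Real.dist_eq, Real.dist_eq] at hlip
  replace hlip := hlip.trans (abs_graphParam_sub_le hδ hθ)
  have h₁ := graphTime_le_graphTime_add_of_levyBelowOn hℓ hm hT hε hmℓ
    ((abs_sub_comm _ _).trans_le hδ) (graphParam ℓ T θ)
  have h₂ := graphTime_le_graphTime_add_of_levyBelowOn hm hℓ hT hε hℓm hδ (graphParam ℓ T θ)
  rw [paramTime, paramTime, abs_le]
  constructor <;> linarith [(abs_le.1 hlip).1, (abs_le.1 hlip).2]

lemma abs_paramValue_sub_le (hℓ : MemM ℓ) (hm : MemM m) (hT : -1 ≤ T) (hε : 0 ≤ ε)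
    (hmℓ : LevyBelowOn T ε m ℓ) (hℓm : LevyBelowOn T ε ℓ m) (hδ : |m T - ℓ T| ≤ δ)
    {θ : ℝ} (hθ : θ ∈ Icc (0 : ℝ) 1) :
    |paramValue m T θ - paramValue ℓ T θ| ≤ ε + 4 * δ := by
  have hlip := (lipschitzWith_graphLevel (ℓ := m) (T := T)).dist_le_mul (graphParam m T θ)
    (graphParam ℓ T θ)
  rw [NNReal.coe_one, one_mul, Real.dist_eq, Real.dist_eq] at hlip
  replace hlip := hlip.trans (abs_graphParam_sub_le hδ hθ)
  have hlevel := (abs_graphLevel_sub_graphLevel_le (ℓ := m) (m := ℓ) (T := T)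
    (graphParam ℓ T θ)).trans hδ
  have htime := abs_le.1 (abs_paramTime_sub_le hℓ hm hT hε hmℓ hℓm hδ hθ)
  rw [paramValue, paramValue, graphValue, graphValue, abs_le]
  rw [paramTime, paramTime] at htime
  constructor <;> linarith [(abs_le.1 hlip).1, (abs_le.1 hlip).2, (abs_le.1 hlevel).1,
    (abs_le.1 hlevel).2]

end Comparison

section ParamRep

variable {ℓ f G : ℝ → ℝ} {T : ℝ}

lemma leftVal_sub_comp (hℓ : MemM ℓ) (hf : ContinuousOn f (Ici (-1)))
    (hG : ContinuousOn G (Icc (-1) 1)) {t : ℝ} (ht : -1 ≤ t) :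
    leftVal (-1) (fun s => f s - G (ℓ s)) t = f t - G (leftVal (-1) (extendLeft ℓ) t) := by
  rcases ht.eq_or_lt with rfl | ht
  · simp only [leftVal, if_pos, extendLeft_of_le le_rfl]
  simp only [leftVal, if_neg ht.ne']
  have hnear : Ioo (-1) t ∈ 𝓝[<] t := Ioo_mem_nhdsLT ht
  have hf' : Tendsto f (𝓝[<] t) (𝓝 (f t)) :=
    (hf t ht.le).tendsto.mono_left
      (nhdsWithin_le_of_mem (mem_of_superset hnear fun _ hs => hs.1.le))
  have hℓ' : Tendsto (extendLeft ℓ) (𝓝[<] t) (𝓝[Icc (-1) 1] (leftLim (extendLeft ℓ) t)) :=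
    tendsto_nhdsWithin_iff.2 ⟨hℓ.monotone_extendLeft.tendsto_leftLim t,
      Eventually.of_forall fun s => Icc_subset_Icc_left (by norm_num) (hℓ.extendLeft_mem_Icc s)⟩
  have hlim := hℓ.leftVal_mem_Icc t
  simp only [leftVal, if_neg ht.ne'] at hlim
  refine leftLim_eq_of_tendsto (hf'.sub ?_)
  refine ((hG _ (Icc_subset_Icc_left (by norm_num) hlim)).tendsto.comp hℓ').congr' ?_
  filter_upwards [hnear] with s hs
  simp only [comp_apply, extendLeft_of_le hs.1.le]

lemma mem_cGraph_sub_comp_iff (hℓ : MemM ℓ) (hf : ContinuousOn f (Ici (-1)))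
    (hG : ContinuousOn G (Icc (-1) 1)) (hGm : MonotoneOn G (Icc (-1) 1)) {p : ℝ × ℝ} :
    p ∈ cGraph (-1) T (fun s => f s - G (ℓ s)) ↔ p.2 ∈ Icc (-1) T ∧
      f p.2 - p.1 ∈ G '' Icc (leftVal (-1) (extendLeft ℓ) p.2) (extendLeft ℓ p.2) := by
  simp only [cGraph, mem_ofPred_eq, and_congr_right_iff]
  intro ht
  have hsub : Icc (leftVal (-1) (extendLeft ℓ) p.2) (extendLeft ℓ p.2) ⊆ Icc (-1) 1 :=
    Icc_subset_Icc ((neg_one_lt_zero.le).trans (hℓ.leftVal_mem_Icc _).1)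
      (hℓ.extendLeft_le_one _)
  have hle := hℓ.leftVal_le_extendLeft p.2
  rw [(hG.mono hsub).image_Icc_of_monotoneOn hle (hGm.mono hsub), leftVal_sub_comp hℓ hf hG ht.1,
    ← extendLeft_of_le (ℓ := ℓ) ht.1, segment_symm, segment_eq_Icc]
  · simp only [mem_Icc]
    constructor <;> rintro ⟨h₁, h₂⟩ <;> constructor <;> linarith
  · exact sub_le_sub_left (hGm (hsub ⟨le_rfl, hle⟩) (hsub ⟨hle, le_rfl⟩) hle) _

lemma continuous_paramTime (hℓ : MemM ℓ) (hT : -1 ≤ T) : Continuous (paramTime ℓ T) :=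
  (lipschitzWith_graphTime hℓ hT).continuous.comp (by unfold graphParam; fun_prop)

lemma continuous_paramValue (hℓ : MemM ℓ) (hT : -1 ≤ T) : Continuous (paramValue ℓ T) :=
  (lipschitzWith_graphLevel.continuous.comp (by unfold graphParam; fun_prop)).sub
    (continuous_paramTime hℓ hT)

lemma graphParam_mono (hℓ : MemM ℓ) (hT : -1 ≤ T) : Monotone (graphParam ℓ T) := fun _ _ hθ => by
  unfold graphParam
  nlinarith [hℓ.nonneg_s10 hT]

lemma graphParam_div (hℓ : MemM ℓ) (hT : -1 < T) (c : ℝ) :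
    graphParam ℓ T ((c + 1) / (T + 1 + ℓ T)) = c := by
  rw [graphParam, div_mul_cancel₀ _ (by linarith [hℓ.nonneg_s10 hT.le])]
  ring

/-- Since `G` is monotone and continuous, it maps the jump segments of `ℓ` onto those of
`f - G ∘ ℓ`. -/
theorem isParamRep_sub_comp (hℓ : MemM ℓ) (hf : ContinuousOn f (Ici (-1)))
    (hG : ContinuousOn G (Icc (-1) 1)) (hGm : MonotoneOn G (Icc (-1) 1)) (hT : -1 < T) :
    IsParamRep (-1) T (fun s => f s - G (ℓ s)) (fun θ => f (paramTime ℓ T θ) - G (paramValue ℓ T θ))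
      (paramTime ℓ T) := by
  have hR θ : paramTime ℓ T θ ∈ Icc (-1) T := graphTime_mem_Icc hℓ hT.le _
  have hV θ : paramValue ℓ T θ ∈ Icc (-1) 1 :=
    Icc_subset_Icc_left (by norm_num) (graphValue_mem_Icc hℓ hT.le _)
  have hlv θ : leftVal (-1) (extendLeft ℓ) (paramTime ℓ T θ) ∈ Icc (-1) 1 :=
    Icc_subset_Icc_left (by norm_num) (hℓ.leftVal_mem_Icc _)
  have hlvV θ := leftVal_le_graphValue hℓ hT.le (graphParam ℓ T θ)
  refine ⟨(hf.comp (continuous_paramTime hℓ hT.le).continuousOn fun θ _ => (hR θ).1).sub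
      (hG.comp (continuous_paramValue hℓ hT.le).continuousOn fun θ _ => hV θ),
    (continuous_paramTime hℓ hT.le).continuousOn, fun θ θ' _ _ hθ => ?_, ?_⟩
  · have hc := graphParam_mono hℓ hT.le hθ
    rcases (graphTime_mono hℓ hT.le hc).lt_or_eq with hlt | heq
    · exact Or.inl hlt
    replace heq : paramTime ℓ T θ = paramTime ℓ T θ' := heq
    refine Or.inr ⟨heq, ?_⟩
    have hVV : paramValue ℓ T θ ≤ paramValue ℓ T θ' := by
      rw [paramValue, paramValue, graphValue, graphValue]
      rw [paramTime, paramTime] at heq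
      rw [heq]
      linarith [graphLevel_mono (ℓ := ℓ) (T := T) hc]
    dsimp only
    rw [leftVal_sub_comp hℓ hf hG (hR θ).1, leftVal_sub_comp hℓ hf hG (hR θ').1, ← heq,
      sub_sub_sub_cancel_left, sub_sub_sub_cancel_left,
      abs_of_nonpos (sub_nonpos.2 (hGm (hlv θ) (hV θ) (hlvV θ))),
      abs_of_nonpos (sub_nonpos.2 (hGm (hlv θ) (hV θ') ((hlvV θ).trans hVV)))]
    exact neg_le_neg (sub_le_sub_left (hGm (hV θ) (hV θ') hVV) _)
  · ext ⟨p₁, t⟩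
    rw [mem_cGraph_sub_comp_iff hℓ hf hG hGm]
    constructor
    · rintro ⟨θ, -, hθ⟩
      obtain ⟨rfl, rfl⟩ := Prod.mk.inj hθ
      exact ⟨hR θ, paramValue ℓ T θ, ⟨hlvV θ, graphValue_le_extendLeft hℓ hT.le _⟩, by ring⟩
    · rintro ⟨ht, v, hv, hGv⟩
      dsimp only at ht hv hGv ⊢
      obtain ⟨hlevel, htime⟩ := graphTime_add_eq hℓ hT.le ht hv
      have hpos : 0 < T + 1 + ℓ T := by linarith [hℓ.nonneg_s10 hT.le]
      have hvT := graphLevel_le hℓ hT.le (t + v)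
      rw [hlevel, extendLeft_of_le hT.le] at hvT
      have hc := graphParam_div hℓ hT (t + v)
      have hv0 : -1 ≤ t + v := hlevel ▸ neg_one_le_graphLevel (t + v)
      refine ⟨(t + v + 1) / (T + 1 + ℓ T),
        ⟨div_nonneg (by linarith) hpos.le, (div_le_one hpos).2 (by linarith)⟩, ?_⟩
      simp only [paramTime, paramValue, graphValue, hc, hlevel, htime, add_sub_cancel_left, hGv,
        sub_sub_cancel]

end ParamRep

section M1Estimate

variable {ℓ m f g G : ℝ → ℝ} {T ε δ : ℝ}

lemma m1DistOn_nonneg (a b : ℝ) (x y : ℝ → ℝ) : 0 ≤ m1DistOn a b x y :=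
  Real.sInf_nonneg fun _ ⟨_, _, _, _, _, _, h⟩ => (abs_nonneg _).trans (h 0 ⟨le_rfl, zero_le_one⟩).1

lemma m1DistOn_le_of_isParamRep {a b c : ℝ} {x y u₁ r₁ u₂ r₂ : ℝ → ℝ} (hx : IsParamRep a b x u₁ r₁)
    (hy : IsParamRep a b y u₂ r₂) (h : ∀ s ∈ Icc (0 : ℝ) 1, |u₁ s - u₂ s| ≤ c ∧ |r₁ s - r₂ s| ≤ c) :
    m1DistOn a b x y ≤ c :=
  csInf_le ⟨0, fun _ ⟨_, _, _, _, _, _, h⟩ => (abs_nonneg _).trans (h 0 ⟨le_rfl, zero_le_one⟩).1⟩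
    ⟨u₁, r₁, u₂, r₂, hx, hy, h⟩

/-- The M1 distance on `[-1, T]` is controlled by comparing the canonical parametric
representations of the two paths at equal parameters. -/
theorem m1DistOn_sub_comp_le (hℓ : MemM ℓ) (hm : MemM m) (hf : ContinuousOn f (Ici (-1)))
    (hg : ContinuousOn g (Ici (-1))) (hG : ContinuousOn G (Icc (-1) 1))
    (hGm : MonotoneOn G (Icc (-1) 1)) (hT : -1 < T) (hε : 0 ≤ ε) (hmℓ : LevyBelowOn T ε m ℓ)
    (hℓm : LevyBelowOn T ε ℓ m) (hδ : |m T - ℓ T| ≤ δ) {F Af AG : ℝ}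
    (hF : ∀ t ∈ Icc (-1) T, |g t - f t| ≤ F)
    (hAf : ∀ r ∈ Icc (-1) T, ∀ r' ∈ Icc (-1) T, |r - r'| ≤ ε + 2 * δ → |f r - f r'| ≤ Af)
    (hAG : ∀ v ∈ Icc (0 : ℝ) 1, ∀ v' ∈ Icc (0 : ℝ) 1, |v - v'| ≤ ε + 4 * δ → |G v - G v'| ≤ AG) :
    m1DistOn (-1) T (fun t => g t - G (m t)) (fun t => f t - G (ℓ t)) ≤
      max (F + Af + AG) (ε + 4 * δ) := by
  refine m1DistOn_le_of_isParamRep (isParamRep_sub_comp hm hg hG hGm hT)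
    (isParamRep_sub_comp hℓ hf hG hGm hT) fun θ hθ => ⟨?_, ?_⟩
  · have hRm := graphTime_mem_Icc hm hT.le (graphParam m T θ)
    have hRℓ := graphTime_mem_Icc hℓ hT.le (graphParam ℓ T θ)
    have htime := abs_paramTime_sub_le hℓ hm hT.le hε hmℓ hℓm hδ hθ
    have hvalue := abs_paramValue_sub_le hℓ hm hT.le hε hmℓ hℓm hδ hθ
    refine le_max_of_le_left ?_
    calc |g (paramTime m T θ) - G (paramValue m T θ) - (f (paramTime ℓ T θ) - G (paramValue ℓ T θ))|
        = |(g (paramTime m T θ) - f (paramTime m T θ)) +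
            (f (paramTime m T θ) - f (paramTime ℓ T θ)) +
            (G (paramValue ℓ T θ) - G (paramValue m T θ))| := by ring_nf
      _ ≤ F + Af + AG := by
        refine (abs_add_three _ _ _).trans (add_le_add_three (hF _ hRm) (hAf _ hRm _ hRℓ htime) ?_)
        rw [abs_sub_comm]
        exact hAG _ (graphValue_mem_Icc hm hT.le _) _ (graphValue_mem_Icc hℓ hT.le _) hvalue
  · exact le_max_of_le_right ((abs_paramTime_sub_le hℓ hm hT.le hε hmℓ hℓm hδ hθ).trans
      (by linarith [(abs_nonneg _).trans hδ]))

end M1Estimate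

section StoppedLevy

variable {ℓ m : ℝ → ℝ} {s u ε : ℝ}

/-- `levyDist a b` is by definition `sInf (levySet a b)`. -/
def levySet (a b : ℝ → ℝ) : Set ℝ :=
  {ε | 0 < ε ∧ ∀ t : ℝ, 0 ≤ t → b t ≤ a (t + ε) + ε ∧ a (t - ε) - ε ≤ b t}

/-- The integrand of `dHat`, without the weight `exp (-s)`. -/
def stoppedLevy (m ℓ : ℝ → ℝ) (s : ℝ) : ℝ := min (levyDist (stopAt m s) (stopAt ℓ s)) 1

lemma stoppedLevy_nonneg : 0 ≤ stoppedLevy m ℓ s :=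
  le_min (Real.sInf_nonneg fun _ h => h.1.le) zero_le_one

lemma one_mem_levySet (hm : MemM m) (hℓ : MemM ℓ) (hs : -1 ≤ s) :
    (1 : ℝ) ∈ levySet (stopAt m s) (stopAt ℓ s) := by
  refine ⟨one_pos, fun t ht => ⟨?_, ?_⟩⟩ <;> simp only [stopAt]
  · linarith [hℓ.le_one (min s t) (le_min hs (by linarith)),
      hm.nonneg_s10 (le_min hs (by linarith) : -1 ≤ min s (t + 1))]
  · linarith [hℓ.nonneg_s10 (le_min hs (by linarith) : -1 ≤ min s t),
      hm.le_one (min s (t - 1)) (le_min hs (by linarith))]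

lemma MemM.apply_min_le_add (hℓ : MemM ℓ) (hs : -1 ≤ s) (hsu : s ≤ u) {a : ℝ} (ha : -1 ≤ a) :
    ℓ (min u a) ≤ ℓ (min s a) + (ℓ u - ℓ s) := by
  rcases le_total a s with has | hsa
  · rw [min_eq_right has, min_eq_right (has.trans hsu)]
    linarith [hℓ.apply_le_apply hs hsu]
  · rw [min_eq_left hsa]
    linarith [hℓ.apply_le_apply (le_min (hs.trans hsu) ha) (min_le_left u a)]

lemma add_mem_levySet_stopAt_of_le (hm : MemM m) (hℓ : MemM ℓ) (hs : -1 ≤ s) (hsu : s ≤ u)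
    (hε : ε + ((ℓ u - ℓ s) + (m u - m s)) ≤ 1) (hmem : ε ∈ levySet (stopAt m s) (stopAt ℓ s)) :
    ε + ((ℓ u - ℓ s) + (m u - m s)) ∈ levySet (stopAt m u) (stopAt ℓ u) := by
  obtain ⟨hε0, hlevy⟩ := hmem
  have hΔℓ := hℓ.apply_le_apply hs hsu
  have hΔm := hm.apply_le_apply hs hsu
  refine ⟨by linarith, fun t ht => ⟨?_, ?_⟩⟩ <;> have h := hlevy t ht <;> simp only [stopAt] at h ⊢
  · linarith [hℓ.apply_min_le_add hs hsu (by linarith : -1 ≤ t),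
      hm.apply_le_apply (le_min hs (by linarith)) (min_le_min hsu (by linarith) :
        min s (t + ε) ≤ min u (t + (ε + ((ℓ u - ℓ s) + (m u - m s)))))]
  · linarith [hm.apply_min_le_add hs hsu (by linarith : -1 ≤ t - ε),
      hm.apply_le_apply (le_min (hs.trans hsu) (by linarith)) (min_le_min le_rfl (by linarith) :
        min u (t - (ε + ((ℓ u - ℓ s) + (m u - m s)))) ≤ min u (t - ε)),
      hℓ.apply_le_apply (le_min hs (by linarith)) (min_le_min hsu le_rfl : min s t ≤ min u t)]

lemma add_mem_levySet_stopAt_of_ge (hm : MemM m) (hℓ : MemM ℓ) (hs : -1 ≤ s) (hsu : s ≤ u)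
    (hε : ε + ((ℓ u - ℓ s) + (m u - m s)) ≤ 1) (hmem : ε ∈ levySet (stopAt m u) (stopAt ℓ u)) :
    ε + ((ℓ u - ℓ s) + (m u - m s)) ∈ levySet (stopAt m s) (stopAt ℓ s) := by
  obtain ⟨hε0, hlevy⟩ := hmem
  have hΔℓ := hℓ.apply_le_apply hs hsu
  have hΔm := hm.apply_le_apply hs hsu
  refine ⟨by linarith, fun t ht => ⟨?_, ?_⟩⟩ <;> have h := hlevy t ht <;> simp only [stopAt] at h ⊢
  · linarith [hℓ.apply_le_apply (le_min hs (by linarith))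
        (min_le_min hsu le_rfl : min s t ≤ min u t),
      hm.apply_min_le_add hs hsu (by linarith : -1 ≤ t + ε),
      hm.apply_le_apply (le_min hs (by linarith)) (min_le_min le_rfl (by linarith) :
        min s (t + ε) ≤ min s (t + (ε + ((ℓ u - ℓ s) + (m u - m s)))))]
  · linarith [hm.apply_le_apply (le_min hs (by linarith)) (min_le_min hsu (by linarith) :
        min s (t - (ε + ((ℓ u - ℓ s) + (m u - m s)))) ≤ min u (t - ε)),
      hℓ.apply_min_le_add hs hsu (by linarith : -1 ≤ t)]

lemma min_csInf_le_min_csInf_add {S₁ S₂ : Set ℝ} {Δ : ℝ} (hΔ : 0 ≤ Δ) (h₁ : S₁.Nonempty)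
    (h₂ : BddBelow S₂) (h : ∀ ε ∈ S₁, ε + Δ ≤ 1 → ε + Δ ∈ S₂) :
    min (sInf S₂) 1 ≤ min (sInf S₁) 1 + Δ := by
  rcases le_or_gt 1 (sInf S₁ + Δ) with hle | hlt
  · rw [← min_add_add_right]
    exact (min_le_right _ _).trans (le_min hle (by linarith))
  refine (min_le_left _ _).trans ?_
  rw [min_eq_left (by linarith)]
  by_contra! hcon
  obtain ⟨ε, hε, hεlt⟩ := exists_lt_of_csInf_lt h₁
    (lt_min (by linarith) (by linarith) : sInf S₁ < min (sInf S₂ - Δ) (1 - Δ))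
  have := csInf_le h₂ (h ε hε (by linarith [min_le_right (sInf S₂ - Δ) (1 - Δ)]))
  linarith [min_le_left (sInf S₂ - Δ) (1 - Δ)]

lemma abs_stoppedLevy_sub_le (hm : MemM m) (hℓ : MemM ℓ) (hs : -1 ≤ s) (hsu : s ≤ u) :
    |stoppedLevy m ℓ u - stoppedLevy m ℓ s| ≤ (ℓ u - ℓ s) + (m u - m s) := by
  have hΔ : 0 ≤ (ℓ u - ℓ s) + (m u - m s) := by
    linarith [hℓ.apply_le_apply hs hsu, hm.apply_le_apply hs hsu]
  have hbdd a b : BddBelow (levySet a b) := ⟨0, fun _ h => h.1.le⟩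
  have h₁ : stoppedLevy m ℓ s ≤ stoppedLevy m ℓ u + ((ℓ u - ℓ s) + (m u - m s)) :=
    min_csInf_le_min_csInf_add hΔ ⟨1, one_mem_levySet hm hℓ (hs.trans hsu)⟩ (hbdd _ _)
      fun ε hε hε1 => add_mem_levySet_stopAt_of_ge hm hℓ hs hsu hε1 hε
  have h₂ : stoppedLevy m ℓ u ≤ stoppedLevy m ℓ s + ((ℓ u - ℓ s) + (m u - m s)) :=
    min_csInf_le_min_csInf_add hΔ ⟨1, one_mem_levySet hm hℓ hs⟩ (hbdd _ _)
      fun ε hε hε1 => add_mem_levySet_stopAt_of_le hm hℓ hs hsu hε1 hε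
  rw [abs_le]
  constructor <;> linarith

end StoppedLevy

lemma setIntegral_exp_neg_mul_min_le {d b : ℝ → ℝ} {c T₀ : ℝ} (hc : 0 ≤ c) (hT₀ : 0 ≤ T₀)
    (hd : ∀ T, 0 ≤ d T) (hb : IntervalIntegrable b volume 0 T₀)
    (h : ∀ T ∈ Ioc 0 T₀, Real.exp (-T) * min (d T) 1 ≤ c * Real.exp (-T) + b T) :
    ∫ T in Ioi 0, Real.exp (-T) * min (d T) 1 ≤ c + (∫ T in 0..T₀, b T) + Real.exp (-T₀) := by
  rw [intervalIntegral.integral_of_le hT₀]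
  rw [intervalIntegrable_iff_integrableOn_Ioc_of_le hT₀] at hb
  have h₁ : IntegrableOn (fun T => c * Real.exp (-T)) (Ioi 0) :=
    (integrableOn_exp_neg_Ioi 0).const_mul c
  have h₂ : IntegrableOn (fun T => (Ioc 0 T₀).indicator b T) (Ioi 0) :=
    (hb.integrable_indicator measurableSet_Ioc).integrableOn
  have h₃ : IntegrableOn (fun T => (Ioi T₀).indicator (fun T => Real.exp (-T)) T) (Ioi 0) :=
    ((integrableOn_exp_neg_Ioi T₀).integrable_indicator measurableSet_Ioi).integrableOn
  have h₁₂ : IntegrableOn (fun T => c * Real.exp (-T) + (Ioc 0 T₀).indicator b T) (Ioi 0) :=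
    h₁.add h₂
  have hψ : IntegrableOn (fun T => c * Real.exp (-T) + (Ioc 0 T₀).indicator b T +
      (Ioi T₀).indicator (fun T => Real.exp (-T)) T) (Ioi 0) := h₁₂.add h₃
  refine (integral_mono_of_nonneg (Eventually.of_forall fun T =>
      mul_nonneg (Real.exp_pos _).le (le_min (hd T) zero_le_one)) hψ
    ((ae_restrict_iff' measurableSet_Ioi).2 (Eventually.of_forall fun T hT => ?_))).trans_eq ?_
  · dsimp only
    rcases le_or_gt T T₀ with hle | hlt
    · rw [indicator_of_mem (show T ∈ Ioc 0 T₀ from ⟨hT, hle⟩),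
        indicator_of_notMem (show T ∉ Ioi T₀ from not_lt.2 hle), add_zero]
      exact h T ⟨hT, hle⟩
    · rw [indicator_of_notMem (show T ∉ Ioc 0 T₀ from fun h' => hlt.not_ge h'.2),
        indicator_of_mem (show T ∈ Ioi T₀ from hlt), add_zero]
      linarith [mul_le_of_le_one_right (Real.exp_pos (-T)).le (min_le_right (d T) 1),
        mul_nonneg hc (Real.exp_pos (-T)).le]
  · rw [integral_add h₁₂ h₃, integral_add h₁ h₂, integral_const_mul, integral_exp_neg_Ioi_zero,
      mul_one, setIntegral_indicator measurableSet_Ioc, setIntegral_indicator measurableSet_Ioi,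
      inter_eq_right.2 Ioc_subset_Ioi_self, Ioi_inter_Ioi, max_eq_right hT₀, integral_exp_neg_Ioi]

section BadTimes

variable {ℓ m : ℝ → ℝ}

lemma integrableOn_exp_neg_mul_stoppedLevy (hm : MemM m) (hℓ : MemM ℓ) :
    IntegrableOn (fun s => Real.exp (-s) * stoppedLevy m ℓ s) (Ioi 0) := by
  -- `stoppedLevy` has bounded variation, so adding `ℓ + m` makes it monotone.
  have hmono : MonotoneOn (fun s => stoppedLevy m ℓ s + (ℓ s + m s)) (Ioi 0) :=
    fun s hs u _ hsu => by
      linarith [(abs_le.1 (abs_stoppedLevy_sub_le hm hℓ (by linarith [mem_Ioi.1 hs]) hsu)).1]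
  have hsum : MonotoneOn (fun s => ℓ s + m s) (Ioi 0) := fun s hs u _ hsu =>
    add_le_add (hℓ.apply_le_apply (by linarith [mem_Ioi.1 hs]) hsu)
      (hm.apply_le_apply (by linarith [mem_Ioi.1 hs]) hsu)
  have hmeas : AEMeasurable (stoppedLevy m ℓ) (volume.restrict (Ioi 0)) :=
    ((aemeasurable_restrict_of_monotoneOn measurableSet_Ioi hmono).sub
      (aemeasurable_restrict_of_monotoneOn measurableSet_Ioi hsum)).congr
      (Eventually.of_forall fun s => by simp)
  refine (integrableOn_exp_neg_Ioi 0).mono'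
    ((Real.continuous_exp.comp continuous_neg).aestronglyMeasurable.mul
      hmeas.aestronglyMeasurable) (Eventually.of_forall fun s => ?_)
  rw [norm_mul, Real.norm_of_nonneg (Real.exp_pos _).le,
    Real.norm_of_nonneg stoppedLevy_nonneg]
  exact mul_le_of_le_one_right (Real.exp_pos _).le (min_le_right _ _)

lemma intervalIntegrable_stoppedLevy_add_one (hm : MemM m) (hℓ : MemM ℓ) {T₀ : ℝ} (hT₀ : 0 ≤ T₀) :
    IntervalIntegrable (fun T => Real.exp (-(T + 1)) * stoppedLevy m ℓ (T + 1)) volume 0 T₀ := by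
  have h := ((integrableOn_exp_neg_mul_stoppedLevy hm hℓ).mono_set
    fun s (hs : s ∈ uIcc 1 (T₀ + 1)) =>
    lt_of_lt_of_le (lt_min one_pos (by linarith)) hs.1).intervalIntegrable.comp_add_right 1
  simpa only [sub_self, add_sub_cancel_right] using h

lemma intervalIntegral_stoppedLevy_add_one_le (hm : MemM m) (hℓ : MemM ℓ) {T₀ : ℝ}
    (hT₀ : 0 ≤ T₀) : ∫ T in 0..T₀, Real.exp (-(T + 1)) * stoppedLevy m ℓ (T + 1) ≤ dHat m ℓ := by
  rw [intervalIntegral.integral_comp_add_right (fun s => Real.exp (-s) * stoppedLevy m ℓ s),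
    zero_add, intervalIntegral.integral_of_le (by linarith)]
  exact setIntegral_mono_set (integrableOn_exp_neg_mul_stoppedLevy hm hℓ)
    ((ae_restrict_iff' measurableSet_Ioi).2
      (Eventually.of_forall fun s _ => mul_nonneg (Real.exp_pos _).le stoppedLevy_nonneg))
    (show Ioc 1 (T₀ + 1) ⊆ Ioi 0 from fun s hs => one_pos.trans hs.1).eventuallyLE

lemma MemM.intervalIntegrable_extendLeft_sub (hℓ : MemM ℓ) (a T₀ : ℝ) :
    IntervalIntegrable (fun T => extendLeft ℓ (T + a) - extendLeft ℓ (T - a)) volume 0 T₀ :=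
  (hℓ.monotone_extendLeft.comp fun _ _ h => add_le_add_left h a).intervalIntegrable.sub
    (hℓ.monotone_extendLeft.comp fun _ _ h => sub_le_sub_right h a).intervalIntegrable

lemma MemM.intervalIntegral_extendLeft_sub_le (hℓ : MemM ℓ) {T₀ a : ℝ} (hT₀ : 0 ≤ T₀)
    (ha : 0 < a) : ∫ T in 0..T₀, (extendLeft ℓ (T + a) - extendLeft ℓ (T - a)) ≤ 2 * a := by
  have hslope (T : ℝ) : extendLeft ℓ (T + a) - extendLeft ℓ (T - a) =
      2 * a * slope (extendLeft ℓ) (T - a) (T - a + 2 * a) := by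
    rw [slope_def_field, show T - a + 2 * a = T + a by ring, show T + a - (T - a) = 2 * a by ring]
    field_simp
  simp only [hslope]
  rw [intervalIntegral.integral_comp_sub_right
      (fun x => 2 * a * slope (extendLeft ℓ) x (x + 2 * a)),
    intervalIntegral.integral_const_mul, zero_sub]
  have := (hℓ.monotone_extendLeft.monotoneOn _).intervalIntegral_slope_le
    (by linarith : -a ≤ T₀ - a) (by linarith : (0 : ℝ) ≤ 2 * a)
  calc 2 * a * ∫ x in -a..T₀ - a, slope (extendLeft ℓ) x (x + 2 * a)
      ≤ 2 * a * 1 := mul_le_mul_of_nonneg_left (this.trans (by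
        linarith [hℓ.extendLeft_le_one (T₀ - a + 2 * a), hℓ.extendLeft_nonneg (-a)]))
        (by positivity)
    _ = 2 * a := mul_one _

end BadTimes

section Estimate

variable {ℓ m f g G : ℝ → ℝ} {T ε : ℝ}

lemma levyBelowOn_of_mem_levySet (hm : MemM m) (hℓ : MemM ℓ) (hε : ε ≤ 1)
    (hmem : ε ∈ levySet (stopAt m (T + 1)) (stopAt ℓ (T + 1))) :
    LevyBelowOn T ε m ℓ ∧ LevyBelowOn T ε ℓ m := by
  obtain ⟨hε0, hlevy⟩ := hmem
  constructor <;> intro t ht <;> rcases lt_or_ge t 0 with hneg | hpos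
  · linarith [hm.extendLeft_of_neg hneg, hℓ.extendLeft_nonneg (t + ε)]
  · have h := (hlevy (t + ε) (by linarith)).2
    simp only [stopAt, add_sub_cancel_right, min_eq_right (by linarith [ht.2] : t ≤ T + 1),
      min_eq_right (by linarith [ht.2] : t + ε ≤ T + 1)] at h
    rw [extendLeft_of_le ht.1, extendLeft_of_le (by linarith : -1 ≤ t + ε)]
    linarith
  · linarith [hℓ.extendLeft_of_neg hneg, hm.extendLeft_nonneg (t + ε)]
  · have h := (hlevy t hpos).1
    simp only [stopAt, min_eq_right (by linarith [ht.2] : t ≤ T + 1),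
      min_eq_right (by linarith [ht.2] : t + ε ≤ T + 1)] at h
    rw [extendLeft_of_le ht.1, extendLeft_of_le (by linarith : -1 ≤ t + ε)]
    linarith

lemma abs_sub_le_of_levyBelowOn (hℓ : MemM ℓ) (hT : 0 ≤ T) (hε : 0 ≤ ε) (hε1 : ε ≤ 1)
    (hmℓ : LevyBelowOn T ε m ℓ) (hℓm : LevyBelowOn T ε ℓ m) :
    |m T - ℓ T| ≤ extendLeft ℓ (T + ε) - extendLeft ℓ (T - ε) + ε := by
  have h₁ := hmℓ T ⟨by linarith, le_rfl⟩
  have h₂ := hℓm (T - ε) ⟨by linarith, by linarith⟩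
  rw [sub_add_cancel] at h₂
  have h₃ := hℓ.monotone_extendLeft (by linarith : T - ε ≤ T)
  have h₄ := hℓ.monotone_extendLeft (by linarith : T ≤ T + ε)
  rw [extendLeft_of_le (by linarith : -1 ≤ T)] at h₁ h₂ h₃ h₄
  rw [abs_le]
  constructor <;> linarith

lemma exists_mem_levySet_lt (hm : MemM m) (hℓ : MemM ℓ) {s γ : ℝ} (hs : -1 ≤ s) (hγ : 0 < γ)
    (hγ1 : γ < 1) (hlevy : stoppedLevy m ℓ s ≤ γ) :
    ∃ ε ∈ levySet (stopAt m s) (stopAt ℓ s), ε < 2 * γ := by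
  have hdist : levyDist (stopAt m s) (stopAt ℓ s) < 2 * γ := by
    rcases min_cases (levyDist (stopAt m s) (stopAt ℓ s)) 1 with ⟨h, _⟩ | ⟨h, _⟩
    · linarith [show stoppedLevy m ℓ s = _ from h]
    · linarith [show stoppedLevy m ℓ s = 1 from h]
  exact exists_lt_of_csInf_lt ⟨1, one_mem_levySet hm hℓ hs⟩ hdist

theorem m1DistOn_le_of_stoppedLevy_le (hℓ : MemM ℓ) (hm : MemM m)
    (hf : ContinuousOn f (Ici (-1))) (hg : ContinuousOn g (Ici (-1)))
    (hG : ContinuousOn G (Icc (-1) 1)) (hGm : MonotoneOn G (Icc (-1) 1)) (hT : 0 < T)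
    {γ β F Af AG : ℝ} (hγ : 0 < γ) (hγ1 : 2 * γ ≤ 1) (hlevy : stoppedLevy m ℓ (T + 1) ≤ γ)
    (hosc : extendLeft ℓ (T + 2 * γ) - extendLeft ℓ (T - 2 * γ) ≤ β)
    (hF : ∀ t ∈ Icc (-1) T, |g t - f t| ≤ F)
    (hAf : ∀ r ∈ Icc (-1) T, ∀ r' ∈ Icc (-1) T, |r - r'| ≤ 10 * γ + 4 * β → |f r - f r'| ≤ Af)
    (hAG : ∀ v ∈ Icc (0 : ℝ) 1, ∀ v' ∈ Icc (0 : ℝ) 1, |v - v'| ≤ 10 * γ + 4 * β →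
      |G v - G v'| ≤ AG) :
    m1DistOn (-1) T (fun t => g t - G (m t)) (fun t => f t - G (ℓ t)) ≤
      max (F + Af + AG) (10 * γ + 4 * β) := by
  have hβ : 0 ≤ β := (sub_nonneg.2 (hℓ.monotone_extendLeft (by linarith))).trans hosc
  obtain ⟨ε, hε, hε2γ⟩ := exists_mem_levySet_lt hm hℓ (by linarith) hγ (by linarith) hlevy
  obtain ⟨hmℓ, hℓm⟩ := levyBelowOn_of_mem_levySet hm hℓ (by linarith) hε
  have hδ := (abs_sub_le_of_levyBelowOn hℓ hT.le hε.1.le (by linarith) hmℓ hℓm).trans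
    (by linarith [hℓ.monotone_extendLeft (by linarith : T + ε ≤ T + 2 * γ),
      hℓ.monotone_extendLeft (by linarith : T - 2 * γ ≤ T - ε)] : _ ≤ β + 2 * γ)
  refine (m1DistOn_sub_comp_le hℓ hm hf hg hG hGm (by linarith) hε.1.le hmℓ hℓm hδ hF
    (fun r hr r' hr' h => hAf r hr r' hr' (h.trans (by linarith)))
    (fun v hv v' hv' h => hAG v hv v' hv' (h.trans (by linarith)))).trans ?_
  exact max_le_max le_rfl (by linarith)

/-- Where the stopped Lévy distance or the oscillation of `ℓ` around `T` is not small, the bound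
holds trivially because the truncated distance is at most `1`. -/
theorem min_m1DistOn_le (hℓ : MemM ℓ) (hm : MemM m) (hf : ContinuousOn f (Ici (-1)))
    (hg : ContinuousOn g (Ici (-1))) (hG : ContinuousOn G (Icc (-1) 1))
    (hGm : MonotoneOn G (Icc (-1) 1)) (hT : 0 < T) {γ β F Af AG : ℝ} (hγ : 0 < γ)
    (hγ1 : 2 * γ ≤ 1) (hβ : 0 < β) (hF : ∀ t ∈ Icc (-1) T, |g t - f t| ≤ F)
    (hAf : ∀ r ∈ Icc (-1) T, ∀ r' ∈ Icc (-1) T, |r - r'| ≤ 10 * γ + 4 * β → |f r - f r'| ≤ Af)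
    (hAG : ∀ v ∈ Icc (0 : ℝ) 1, ∀ v' ∈ Icc (0 : ℝ) 1, |v - v'| ≤ 10 * γ + 4 * β →
      |G v - G v'| ≤ AG) :
    min (m1DistOn (-1) T (fun t => g t - G (m t)) (fun t => f t - G (ℓ t))) 1 ≤
      max (F + Af + AG) (10 * γ + 4 * β) + stoppedLevy m ℓ (T + 1) / γ +
        (extendLeft ℓ (T + 2 * γ) - extendLeft ℓ (T - 2 * γ)) / β := by
  have hlevy0 : 0 ≤ stoppedLevy m ℓ (T + 1) / γ := div_nonneg stoppedLevy_nonneg hγ.le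
  have hosc0 : 0 ≤ (extendLeft ℓ (T + 2 * γ) - extendLeft ℓ (T - 2 * γ)) / β :=
    div_nonneg (sub_nonneg.2 (hℓ.monotone_extendLeft (by linarith))) hβ.le
  have hmax : 0 ≤ max (F + Af + AG) (10 * γ + 4 * β) := le_max_of_le_right (by linarith)
  by_cases hgood : stoppedLevy m ℓ (T + 1) ≤ γ ∧
    extendLeft ℓ (T + 2 * γ) - extendLeft ℓ (T - 2 * γ) ≤ β
  · linarith [min_le_left (m1DistOn (-1) T (fun t => g t - G (m t)) (fun t => f t - G (ℓ t))) 1,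
      m1DistOn_le_of_stoppedLevy_le hℓ hm hf hg hG hGm hT hγ hγ1 hgood.1 hgood.2 hF hAf hAG]
  · rw [not_and_or, not_le, not_le, ← one_lt_div hγ, ← one_lt_div hβ] at hgood
    rcases hgood with hbad | hbad <;> linarith [min_le_right (m1DistOn (-1) T
      (fun t => g t - G (m t)) (fun t => f t - G (ℓ t))) 1]

end Estimate

lemma m1Dist_nonneg (x y : ℝ → ℝ) : 0 ≤ m1Dist x y :=
  setIntegral_nonneg measurableSet_Ioi fun _ _ =>
    mul_nonneg (Real.exp_pos _).le (le_min (m1DistOn_nonneg _ _ _ _) zero_le_one)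

/-- The four terms bound the contributions of the good times, of the times where the stopped
Lévy distance exceeds `γ`, of the times where `ℓ` oscillates by more than `β`, and of the tail
`T > T₀`. -/
theorem m1Dist_sub_comp_le {ℓ m f g G : ℝ → ℝ} (hℓ : MemM ℓ) (hm : MemM m)
    (hf : ContinuousOn f (Ici (-1))) (hg : ContinuousOn g (Ici (-1)))
    (hG : ContinuousOn G (Icc (-1) 1)) (hGm : MonotoneOn G (Icc (-1) 1))
    {T₀ γ β F Af AG : ℝ} (hT₀ : 0 ≤ T₀) (hγ : 0 < γ) (hγ1 : 2 * γ ≤ 1) (hβ : 0 < β)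
    (hF : ∀ t ∈ Icc (-1) T₀, |g t - f t| ≤ F)
    (hAf : ∀ r ∈ Icc (-1) T₀, ∀ r' ∈ Icc (-1) T₀, |r - r'| ≤ 10 * γ + 4 * β → |f r - f r'| ≤ Af)
    (hAG : ∀ v ∈ Icc (0 : ℝ) 1, ∀ v' ∈ Icc (0 : ℝ) 1, |v - v'| ≤ 10 * γ + 4 * β →
      |G v - G v'| ≤ AG) :
    m1Dist (fun t => g t - G (m t)) (fun t => f t - G (ℓ t)) ≤
      max (F + Af + AG) (10 * γ + 4 * β) + Real.exp 1 / γ * dHat m ℓ + 4 * γ / β +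
        Real.exp (-T₀) := by
  have hL := intervalIntegral_stoppedLevy_add_one_le hm hℓ hT₀
  have hO := hℓ.intervalIntegral_extendLeft_sub_le hT₀ (by linarith : 0 < 2 * γ)
  have hLint := intervalIntegrable_stoppedLevy_add_one hm hℓ hT₀
  have hOint := hℓ.intervalIntegrable_extendLeft_sub (2 * γ) T₀
  have hc : 0 ≤ max (F + Af + AG) (10 * γ + 4 * β) := le_max_of_le_right (by linarith)
  refine (setIntegral_exp_neg_mul_min_le hc hT₀ (fun T => m1DistOn_nonneg _ _ _ _)
    ((hLint.const_mul (Real.exp 1 / γ)).add (hOint.div_const β)) fun T hT => ?_).trans ?_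
  · have hpt := min_m1DistOn_le hℓ hm hf hg hG hGm hT.1 hγ hγ1 hβ
      (fun t ht => hF t ⟨ht.1, ht.2.trans hT.2⟩)
      (fun r hr r' hr' => hAf r ⟨hr.1, hr.2.trans hT.2⟩ r' ⟨hr'.1, hr'.2.trans hT.2⟩) hAG
    have hexp : Real.exp (-T) = Real.exp 1 * Real.exp (-(T + 1)) := by
      rw [← Real.exp_add]; ring_nf
    have hosc : 0 ≤ (extendLeft ℓ (T + 2 * γ) - extendLeft ℓ (T - 2 * γ)) / β :=
      div_nonneg (sub_nonneg.2 (hℓ.monotone_extendLeft (by linarith))) hβ.le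
    calc Real.exp (-T) * min (m1DistOn (-1) T _ _) 1
        ≤ Real.exp (-T) * (max (F + Af + AG) (10 * γ + 4 * β) + stoppedLevy m ℓ (T + 1) / γ +
          (extendLeft ℓ (T + 2 * γ) - extendLeft ℓ (T - 2 * γ)) / β) :=
        mul_le_mul_of_nonneg_left hpt (Real.exp_pos _).le
      _ = max (F + Af + AG) (10 * γ + 4 * β) * Real.exp (-T) +
          (Real.exp 1 / γ * (Real.exp (-(T + 1)) * stoppedLevy m ℓ (T + 1)) +
            Real.exp (-T) * ((extendLeft ℓ (T + 2 * γ) - extendLeft ℓ (T - 2 * γ)) / β)) := by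
        rw [hexp]; ring
      _ ≤ _ := by
        gcongr
        exact mul_le_of_le_one_left hosc (Real.exp_le_one_iff.2 (by linarith [hT.1]))
  · rw [intervalIntegral.integral_add (hLint.const_mul _) (hOint.div_const β),
      intervalIntegral.integral_const_mul, intervalIntegral.integral_div]
    have := add_le_add (mul_le_mul_of_nonneg_left hL (by positivity : 0 ≤ Real.exp 1 / γ))
      (div_le_div_of_nonneg_right (hO.trans_eq (by ring) : _ ≤ 4 * γ) hβ.le)
    linarith

theorem m1Dist_sub_comp_lt {ℓ m f g G : ℝ → ℝ} (hℓ : MemM ℓ) (hm : MemM m)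
    (hf : ContinuousOn f (Ici (-1))) (hg : ContinuousOn g (Ici (-1)))
    (hG : ContinuousOn G (Icc (-1) 1)) (hGm : MonotoneOn G (Icc (-1) 1))
    {η ρ T₀ : ℝ} (hη : 0 < η) (hρ : 0 < ρ) (hρη : ρ ≤ η / 4) (hρ1 : ρ ≤ 1) (hT₀ : 0 ≤ T₀)
    (hexp : Real.exp (-T₀) < η / 4) (hF : ∀ t ∈ Icc (-1) T₀, |g t - f t| ≤ η / 12)
    (hAf : ∀ r ∈ Icc (-1) T₀, ∀ r' ∈ Icc (-1) T₀, dist r r' < ρ → dist (f r) (f r') < η / 12)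
    (hAG : ∀ v ∈ Icc (-1) 1, ∀ v' ∈ Icc (-1) 1, dist v v' < ρ → dist (G v) (G v') < η / 12)
    (hd : dHat m ℓ < ρ * min η 1 * η / (1024 * Real.exp 1)) :
    m1Dist (fun t => g t - G (m t)) (fun t => f t - G (ℓ t)) < η := by
  -- With `β = ρ / 8`, each of the four terms of `m1Dist_sub_comp_le` is below `η / 4`.
  set γ := ρ * min η 1 / 256
  have hmin : 0 < min η 1 := lt_min hη one_pos
  have hγ : 0 < γ := by positivity
  have hγρ : γ ≤ ρ / 256 := by
    have := mul_le_mul_of_nonneg_left (min_le_right η 1) hρ.le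
    simp only [γ]; linarith
  have hκ : 10 * γ + 4 * (ρ / 8) < ρ := by linarith
  have hbound := m1Dist_sub_comp_le hℓ hm hf hg hG hGm hT₀ hγ (by linarith)
    (by positivity : 0 < ρ / 8) hF
    (fun r hr r' hr' h => (hAf r hr r' hr' ((Real.dist_eq r r').symm ▸ h.trans_lt hκ)).le)
    (fun v hv v' hv' h => (hAG v (Icc_subset_Icc_left (by norm_num) hv) v'
      (Icc_subset_Icc_left (by norm_num) hv') ((Real.dist_eq v v').symm ▸ h.trans_lt hκ)).le)
  have hmax : max (η / 12 + η / 12 + η / 12) (10 * γ + 4 * (ρ / 8)) ≤ η / 4 :=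
    max_le (by linarith) (by linarith)
  have hlevy : Real.exp 1 / γ * dHat m ℓ < η / 4 := by
    rw [div_mul_eq_mul_div, div_lt_iff₀ hγ]
    have h' : dHat m ℓ < γ * η / (4 * Real.exp 1) := hd.trans_eq (by simp only [γ]; ring)
    rw [lt_div_iff₀ (by positivity)] at h'
    linarith
  have hosc : 4 * γ / (ρ / 8) ≤ η / 8 := by
    rw [div_le_iff₀ (by positivity)]
    have := mul_le_mul_of_nonneg_left (min_le_left η 1) hρ.le
    simp only [γ]; linarith
  linarith

theorem stmt10_general (G : ℝ → ℝ)
    (hGcont : ContinuousOn G (Set.Icc (-1 : ℝ) 1))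
    (hGmono : MonotoneOn G (Set.Icc (-1 : ℝ) 1))
    (fn : ℕ → ℝ → ℝ) (f : ℝ → ℝ)
    (hfn : ∀ n, ContinuousOn (fn n) (Set.Ici (-1 : ℝ)))
    (hf : ContinuousOn f (Set.Ici (-1 : ℝ)))
    (ℓn : ℕ → ℝ → ℝ) (ℓ : ℝ → ℝ) (hℓn : ∀ n, MemM (ℓn n)) (hℓ : MemM ℓ)
    -- convergence in Ξ: locally uniform convergence of the continuous parts…
    (hfconv : ∀ T : ℝ, TendstoUniformlyOn (fun n t => fn n t) f Filter.atTop
      (Set.Icc (-1 : ℝ) T))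
    -- …and d̂-convergence of the 𝕄-parts
    (hℓconv : Filter.Tendsto (fun n => dHat (ℓn n) ℓ) Filter.atTop (nhds 0)) :
    Filter.Tendsto
      (fun n => m1Dist (fun t => fn n t - G (ℓn n t)) (fun t => f t - G (ℓ t)))
      Filter.atTop (nhds 0) := by
  refine Metric.tendsto_atTop.2 fun η hη => ?_
  obtain ⟨T₀, hexp, hT₀⟩ := ((Real.tendsto_exp_neg_atTop_nhds_zero.eventually
    (gt_mem_nhds (by positivity : 0 < η / 4))).and (eventually_ge_atTop 0)).exists
  obtain ⟨ρf, hρf, hAf⟩ := Metric.uniformContinuousOn_iff.1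
    (isCompact_Icc.uniformContinuousOn_of_continuous (hf.mono Icc_subset_Ici_self)) _
    (by positivity : 0 < η / 12)
  obtain ⟨ρG, hρG, hAG⟩ := Metric.uniformContinuousOn_iff.1
    (isCompact_Icc.uniformContinuousOn_of_continuous hGcont) _ (by positivity : 0 < η / 12)
  set ρ := min (min ρf ρG) (min (η / 4) 1)
  have hρ : 0 < ρ := by positivity
  obtain ⟨N, hN⟩ := eventually_atTop.1 ((Metric.tendstoUniformlyOn_iff.1 (hfconv T₀) _
    (by positivity : 0 < η / 12)).and (hℓconv.eventually (gt_mem_nhds (by positivity :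
      0 < ρ * min η 1 * η / (1024 * Real.exp 1)))))
  refine ⟨N, fun n hn => ?_⟩
  obtain ⟨hF, hd⟩ := hN n hn
  rw [Real.dist_eq, sub_zero, abs_of_nonneg (m1Dist_nonneg _ _)]
  exact m1Dist_sub_comp_lt hℓ (hℓn n) hf (hfn n) hGcont hGmono hη hρ
    ((min_le_right _ _).trans (min_le_left _ _)) ((min_le_right _ _).trans (min_le_right _ _))
    hT₀ hexp (fun t ht => by rw [← Real.dist_eq, dist_comm]; exact (hF t ht).le)
    (fun r hr r' hr' h => hAf r hr r' hr' (h.trans_le ((min_le_left _ _).trans (min_le_left _ _))))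
    (fun v hv v' hv' h => hAG v hv v' hv' (h.trans_le ((min_le_left _ _).trans (min_le_right _ _))))
    hd

/-- Lemma 4.1 (i): the embedding `ι(f, ℓ) = f − G(ℓ)` from
`Ξ = 𝒞 × 𝕄` (with locally uniform convergence on `𝒞` and `d̂` on `𝕄`) to `𝒟` with the
Skorokhod M1 topology is continuous (stated sequentially, which is equivalent for metric
spaces). -/
theorem stmt10 (G : ℝ → ℝ)
    (hGcont : ContinuousOn G (Set.Icc (-1 : ℝ) 1))
    (hGmono : MonotoneOn G (Set.Icc (-1 : ℝ) 1)) (hG0 : G 0 = 0)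
    (fn : ℕ → ℝ → ℝ) (f : ℝ → ℝ)
    (hfn : ∀ n, ContinuousOn (fn n) (Set.Ici (-1 : ℝ)))
    (hf : ContinuousOn f (Set.Ici (-1 : ℝ)))
    (ℓn : ℕ → ℝ → ℝ) (ℓ : ℝ → ℝ) (hℓn : ∀ n, MemM (ℓn n)) (hℓ : MemM ℓ)
    -- convergence in Ξ: locally uniform convergence of the continuous parts…
    (hfconv : ∀ T : ℝ, TendstoUniformlyOn (fun n t => fn n t) f Filter.atTop
      (Set.Icc (-1 : ℝ) T))
    -- …and d̂-convergence of the 𝕄-parts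
    (hℓconv : Filter.Tendsto (fun n => dHat (ℓn n) ℓ) Filter.atTop (nhds 0)) :
    Filter.Tendsto
      (fun n => m1Dist (fun t => fn n t - G (ℓn n t)) (fun t => f t - G (ℓ t)))
      Filter.atTop (nhds 0) :=
  stmt10_general G hGcont hGmono fn f hfn hf ℓn ℓ hℓn hℓ hfconv hℓconv
end
end

section
/- Let W be a standard Brownian motion and let f : [0,∞) → ℝ be a càdlàg non-decreasing function. Then for every t > 0, the event A_t := { inf_{0≤s≤t} (W_s − f_s) = 0 } has probability zero. -/
open MeasureTheory ProbabilityTheory Filter Set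
open scoped ENNReal NNReal Classical

noncomputable section

/-! Write `g = W - f`; on the event, `g ≥ 0` on `[0, t]` with infimum `0`.

If `g 0 = 0`, then `f 0 = 0` and, `f` being non-decreasing, `W ≥ 0` on `[0, t]`. This is
negligible: along the geometric times `τ j = t (1 + K)^(j - n)` the increments are independent
`N(0, K τ j)`, and each is `≥ -√(K τ j)` only with a fixed probability `p < 1`, while
`W (τ j) > √(K τ j)` has probability at most `1 / K` by Chebyshev; hence `P ≤ p ^ n + n / K`.

If `g 0 > 0`, right-continuity makes `0` the infimum of `g` over some `[h, t]` with `h > 0`, and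
then also the limit of its minima over the uniform grids of `[h, t]`. The minimum over a grid is
`W h + Y` with `Y` a function of the later increments, independent of `W h ~ N(0, h)`, so it
lies in `[0, δ)` with probability at most `δ / √(2π h)`. -/

open Real Topology

namespace ProbabilityTheory

lemma gaussianPDFReal_le_inv_sqrt (v : ℝ≥0) (x : ℝ) :
    gaussianPDFReal 0 v x ≤ (√(2 * π * v))⁻¹ := by
  rw [gaussianPDFReal_def]
  refine mul_le_of_le_one_right (by positivity) (exp_le_one_iff.mpr ?_)
  exact div_nonpos_of_nonpos_of_nonneg (neg_nonpos.mpr (sq_nonneg _)) (by positivity)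

lemma gaussianReal_Ico_le {v : ℝ≥0} (hv : v ≠ 0) (a b : ℝ) :
    gaussianReal 0 v (Ico a b) ≤ ENNReal.ofReal ((b - a) / √(2 * π * v)) := by
  rw [gaussianReal_apply 0 hv]
  calc ∫⁻ x in Ico a b, gaussianPDF 0 v x
      ≤ ∫⁻ _ in Ico a b, ENNReal.ofReal (√(2 * π * v))⁻¹ :=
        setLIntegral_mono' measurableSet_Ico fun x _ ↦
          ENNReal.ofReal_le_ofReal (gaussianPDFReal_le_inv_sqrt v x)
    _ = ENNReal.ofReal ((b - a) / √(2 * π * v)) := by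
        rw [setLIntegral_const, Real.volume_Ico, ← ENNReal.ofReal_mul (by positivity),
          div_eq_inv_mul]

lemma gaussianReal_Ioi_le (v : ℝ≥0) {c : ℝ} (hc : 0 < c) :
    gaussianReal 0 v (Ioi c) ≤ ENNReal.ofReal (v / c ^ 2) := by
  calc gaussianReal 0 v (Ioi c)
      ≤ gaussianReal 0 v {x | c ≤ |id x - ∫ y, id y ∂gaussianReal 0 v|} := by
        refine measure_mono fun x hx ↦ ?_
        simp only [mem_ofPred_eq, id, integral_id_gaussianReal, sub_zero]
        exact (le_of_lt hx).trans (le_abs_self x)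
    _ ≤ ENNReal.ofReal (v / c ^ 2) := by
        simpa only [variance_id_gaussianReal] using
          meas_ge_le_variance_div_sq (memLp_id_gaussianReal 2) hc

lemma gaussianReal_Ici_neg_sqrt {v : ℝ≥0} (hv : v ≠ 0) :
    gaussianReal 0 v (Ici (-√v)) = gaussianReal 0 1 (Ici (-1)) := by
  have hs : 0 < √(v : ℝ) := sqrt_pos.mpr (by positivity)
  have hmap : (gaussianReal 0 1).map (fun x ↦ √(v : ℝ) * x) = gaussianReal 0 v := by
    rw [gaussianReal_map_const_mul, mul_zero]
    congr 1
    ext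
    simp [sq_sqrt v.coe_nonneg]
  rw [← hmap, Measure.map_apply (measurable_const_mul _) measurableSet_Ici]
  congr 1
  ext x
  simp only [mem_preimage, mem_Ici]
  rw [← mul_neg_one, mul_le_mul_iff_right₀ hs]

lemma gaussianReal_Ici_neg_one_lt_one : gaussianReal 0 1 (Ici (-1)) < 1 := by
  have hpos : gaussianReal 0 1 (Iio (-1)) ≠ 0 := fun h ↦ by
    simpa using gaussianReal_absolutelyContinuous' 0 one_ne_zero h
  rw [← compl_Iio, prob_compl_eq_one_sub measurableSet_Iio]
  exact ENNReal.sub_lt_self ENNReal.one_ne_top one_ne_zero hpos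

section
variable {Ω : Type*} [MeasurableSpace Ω] {P : Measure Ω}


lemma IndepFun.measure_add_mem_le [IsProbabilityMeasure P] {Z Y : Ω → ℝ}
    (hZ : Measurable Z) (hY : Measurable Y) (hZY : IndepFun Z Y P) {s : Set ℝ}
    (hs : MeasurableSet s) {c : ℝ≥0∞} (hc : ∀ y, P.map Z ((· + y) ⁻¹' s) ≤ c) :
    P {ω | Z ω + Y ω ∈ s} ≤ c := by
  have hmeas : MeasurableSet {p : ℝ × ℝ | p.1 + p.2 ∈ s} := measurable_add hs
  have hlaw := (indepFun_iff_map_prod_eq_prod_map_map hZ.aemeasurable hY.aemeasurable).mp hZY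
  have : IsProbabilityMeasure (P.map Y) := Measure.isProbabilityMeasure_map hY.aemeasurable
  calc P {ω | Z ω + Y ω ∈ s}
      = (P.map Z).prod (P.map Y) {p | p.1 + p.2 ∈ s} := by
        rw [← hlaw, Measure.map_apply (hZ.prodMk hY) hmeas]; rfl
    _ = ∫⁻ y, P.map Z ((· + y) ⁻¹' s) ∂P.map Y := Measure.prod_apply_symm hmeas
    _ ≤ ∫⁻ _, c ∂P.map Y := lintegral_mono hc
    _ = c := by simp

lemma IndepFun.measure_add_mem_Ico_le [IsProbabilityMeasure P] {Z Y : Ω → ℝ}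
    (hZ : Measurable Z) (hY : Measurable Y) (hZY : IndepFun Z Y P) {v : ℝ≥0} (hv : v ≠ 0)
    (hlaw : P.map Z = gaussianReal 0 v) (a b : ℝ) :
    P {ω | Z ω + Y ω ∈ Ico a b} ≤ ENNReal.ofReal ((b - a) / √(2 * π * v)) :=
  hZY.measure_add_mem_le hZ hY measurableSet_Ico fun y ↦ by
    rw [hlaw, preimage_add_const_Ico]
    simpa using gaussianReal_Ico_le hv (a - y) (b - y)

end

end ProbabilityTheory

lemma MeasureTheory.measure_setOf_eventually_le {α : Type*} [MeasurableSpace α] {μ : Measure α}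
    {S : ℕ → Set α} {c : ℝ≥0∞} (h : ∀ n, μ (S n) ≤ c) :
    μ {x | ∀ᶠ n in atTop, x ∈ S n} ≤ c := by
  have hmono : Monotone fun N ↦ ⋂ n ≥ N, S n := fun _ _ hab ↦
    biInter_subset_biInter_left fun _ hn ↦ hab.trans hn
  have hset : {x | ∀ᶠ n in atTop, x ∈ S n} = ⋃ N, ⋂ n ≥ N, S n := by
    ext x
    simp [eventually_atTop]
  rw [hset, hmono.measure_iUnion]
  exact iSup_le fun N ↦ (measure_mono (biInter_subset_of_mem le_rfl)).trans (h N)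

def gridTime (h t : ℝ) (N k : ℕ) : ℝ := h + (t - h) * k / (N + 1)

section Grid

variable {h t : ℝ}

@[simp]
lemma gridTime_zero (N : ℕ) : gridTime h t N 0 = h := by simp [gridTime]

lemma gridTime_monotone (hht : h ≤ t) (N : ℕ) : Monotone (gridTime h t N) := fun k l hkl ↦ by
  unfold gridTime
  gcongr

lemma gridTime_mem_Icc (hht : h ≤ t) {N k : ℕ} (hk : k ≤ N + 1) :
    gridTime h t N k ∈ Icc h t := by
  have hk' : (k : ℝ) / (N + 1) ≤ 1 := div_le_one_of_le₀ (by exact_mod_cast hk) (by positivity)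
  have hd : 0 ≤ t - h := by linarith
  rw [gridTime, mul_div_assoc]
  exact ⟨le_add_of_nonneg_right (mul_nonneg hd (by positivity)),
    by linarith [mul_le_of_le_one_right hd hk']⟩

lemma eventually_exists_gridTime_mem_Ico (hht : h < t) {s u : ℝ} (hs : s ∈ Icc h t)
    (hsu : s < u) : ∀ᶠ N in atTop, ∃ k ≤ N + 1, gridTime h t N k ∈ Ico s u := by
  have hd : 0 < t - h := sub_pos.mpr hht
  have hmesh : Tendsto (fun N : ℕ ↦ (t - h) / (N + 1)) atTop (𝓝 0) := by
    have h₀ := tendsto_one_div_add_atTop_nhds_zero_nat.const_mul (t - h)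
    rw [mul_zero] at h₀
    exact h₀.congr fun N ↦ mul_one_div _ _
  filter_upwards [hmesh.eventually (gt_mem_nhds (sub_pos.mpr hsu))] with N hN
  -- the first grid point to the right of `s`
  set x : ℝ := (s - h) * (N + 1) / (t - h)
  have hx : s = h + (t - h) * x / (N + 1) := by simp only [x]; field_simp; ring
  refine ⟨⌈x⌉₊, Nat.ceil_le.mpr ?_, ?_, ?_⟩
  · rw [div_le_iff₀ hd]
    push_cast
    nlinarith [hs.2]
  · rw [hx, gridTime]
    gcongr
    exact Nat.le_ceil x
  · calc gridTime h t N ⌈x⌉₊ < h + (t - h) * (x + 1) / (N + 1) := by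
          unfold gridTime
          gcongr
          exact Nat.ceil_lt_add_one (div_nonneg (mul_nonneg (by linarith [hs.1]) (by positivity))
            hd.le)
      _ = s + (t - h) / (N + 1) := by rw [hx]; ring
      _ < u := by linarith

lemma eventually_inf'_gridTime_mem_Ico (hht : h < t) {g : ℝ → ℝ}
    (hglb : IsGLB (g '' Icc h t) 0) (hrc : ∀ s ∈ Icc h t, ContinuousWithinAt g (Ici s) s)
    {δ : ℝ} (hδ : 0 < δ) :
    ∀ᶠ N in atTop, (Finset.range (N + 2)).inf' Finset.nonempty_range_add_one
      (fun k ↦ g (gridTime h t N k)) ∈ Ico 0 δ := by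
  obtain ⟨_, ⟨s, hs, rfl⟩, -, hgs⟩ := hglb.exists_between hδ
  obtain ⟨u, hsu, hu⟩ :=
    mem_nhdsGE_iff_exists_Ico_subset.mp ((hrc s hs).eventually_lt_const hgs)
  filter_upwards [eventually_exists_gridTime_mem_Ico hht hs hsu] with N ⟨k, hk, hkmem⟩
  refine ⟨Finset.le_inf' _ _ fun j hj ↦ hglb.1 ⟨_, gridTime_mem_Icc hht.le ?_, rfl⟩, ?_⟩
  · exact Nat.lt_succ_iff.mp (Finset.mem_range.mp hj)
  · exact (Finset.inf'_le _ (Finset.mem_range.mpr (by omega))).trans_lt (hu hkmem)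

end Grid

lemma bddBelow_image_sub_of_monotoneOn {w f : ℝ → ℝ} {a b : ℝ} (hw : ContinuousOn w (Icc a b))
    (hf : MonotoneOn f (Icc a b)) : BddBelow ((fun s ↦ w s - f s) '' Icc a b) := by
  rcases le_or_gt a b with hab | hab
  · obtain ⟨c, hc⟩ := isCompact_Icc.bddBelow_image hw
    refine ⟨c - f b, ?_⟩
    rintro _ ⟨s, hs, rfl⟩
    have hfs : f s ≤ f b := hf hs (right_mem_Icc.mpr hab) hs.2
    linarith [hc ⟨s, hs, rfl⟩]
  · simp [Icc_eq_empty_of_lt hab]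

lemma exists_isGLB_image_Icc_of_pos {g : ℝ → ℝ} {t : ℝ} (ht : 0 < t)
    (hglb : IsGLB (g '' Icc 0 t) 0) (hg : ContinuousWithinAt g (Ici 0) 0) (hg0 : 0 < g 0) :
    ∃ n : ℕ, IsGLB (g '' Icc (t / (n + 2)) t) 0 := by
  obtain ⟨u, hu0, hu⟩ :=
    mem_nhdsGE_iff_exists_Ico_subset.mp (hg.eventually_const_lt (half_lt_self hg0))
  obtain ⟨n, hn⟩ := exists_nat_gt (t / u)
  have hh0 : 0 < t / (n + 2) := by positivity
  have hhu : t / (n + 2) < u := by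
    rw [div_lt_iff₀ hu0] at hn
    rw [div_lt_iff₀ (by positivity)]
    nlinarith
  refine ⟨n, fun _ ⟨s, hs, hgs⟩ ↦ hgs ▸ hglb.1 ⟨s, ⟨hh0.le.trans hs.1, hs.2⟩, rfl⟩,
    fun b hb ↦ not_lt.mp fun hb0 ↦ ?_⟩
  have hmin : min b (g 0 / 2) ∈ lowerBounds (g '' Icc 0 t) := by
    rintro _ ⟨s, hs, rfl⟩
    rcases lt_or_ge s (t / (n + 2)) with hs' | hs'
    · exact (min_le_right _ _).trans (hu ⟨hs.1, hs'.trans hhu⟩).le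
    · exact (min_le_left _ _).trans (hb ⟨s, ⟨hs', hs.2⟩, rfl⟩)
  exact (lt_min hb0 (half_pos hg0)).not_ge (hglb.2 hmin)

abbrev incrementSigmaAlgebra {Ω : Type*} (W : ℝ → Ω → ℝ) (σ : ℕ → ℝ) : MeasurableSpace Ω :=
  ⨆ k, MeasurableSpace.comap (fun ω ↦ W (σ (k + 1)) ω - W (σ k) ω) inferInstance

namespace IsStandardBM

variable {Ω : Type*} [MeasurableSpace Ω] {P : Measure Ω} {W : ℝ → Ω → ℝ}

lemma measurable_sub (hW : IsStandardBM P W) (s t : ℝ) : Measurable fun ω ↦ W t ω - W s ω :=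
  (hW.meas t).sub (hW.meas s)

lemma map_eq (hW : IsStandardBM P W) {t : ℝ} (ht : 0 ≤ t) :
    P.map (W t) = gaussianReal 0 t.toNNReal := by
  have h := hW.incr_law 0 t le_rfl ht
  rw [sub_zero] at h
  rw [← h]
  exact Measure.map_congr (hW.init.mono fun ω hω ↦ by simp [hω])

lemma iIndepFun_increments (hW : IsStandardBM P W) {ρ : ℕ → ℝ} (hρ : Monotone ρ)
    (hρ0 : 0 ≤ ρ 0) : iIndepFun (fun k ω ↦ W (ρ (k + 1)) ω - W (ρ k) ω) P := by
  rw [iIndepFun_iff_finset]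
  intro s
  obtain ⟨n, hn⟩ := s.exists_nat_subset_range
  have hfin := hW.indep_incr n (fun j ↦ ρ j) (hρ.comp Fin.val_strictMono.monotone)
    fun j ↦ hρ0.trans (hρ (Nat.zero_le _))
  have hinj : Function.Injective fun k : s ↦ (⟨k, Finset.mem_range.mp (hn k.2)⟩ : Fin n) :=
    fun k l hkl ↦ Subtype.ext (congrArg Fin.val hkl)
  exact hfin.precomp (f := fun (j : Fin n) ω ↦ W (ρ (j + 1)) ω - W (ρ j) ω) hinj

lemma indep_increments (hW : IsStandardBM P W) {σ : ℕ → ℝ} (hσ : Monotone σ)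
    (hσ0 : 0 ≤ σ 0) :
    Indep (MeasurableSpace.comap (fun ω ↦ W (σ 0) ω - W 0 ω) inferInstance)
      (incrementSigmaAlgebra W σ) P := by
  set ρ : ℕ → ℝ := fun k ↦ if k = 0 then 0 else σ (k - 1) with hρ
  have hρmono : Monotone ρ := by
    intro k l hkl
    rcases Nat.eq_zero_or_pos k with rfl | hk
    · simp only [hρ, if_pos]
      split_ifs
      exacts [le_rfl, hσ0.trans (hσ (Nat.zero_le _))]
    · simp only [hρ, if_neg hk.ne', if_neg (hk.trans_le hkl).ne']
      exact hσ (by omega)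
  have hind := (iIndepFun_iff_iIndep _ _ _).mp (hW.iIndepFun_increments hρmono le_rfl)
  have h := indep_iSup_of_disjoint (fun k ↦ (hW.measurable_sub _ _).comap_le) hind
    (Set.disjoint_singleton_left.mpr (Set.notMem_compl_iff.mpr rfl) :
      Disjoint ({0} : Set ℕ) {0}ᶜ)
  rw [iSup_singleton] at h
  refine indep_of_indep_of_le_right (by simpa [hρ] using h) (iSup_le fun k ↦ ?_)
  refine le_trans ?_ (le_iSup₂ (f := fun i (_ : i ∈ ({0}ᶜ : Set ℕ)) ↦
    MeasurableSpace.comap (fun ω ↦ W (ρ (i + 1)) ω - W (ρ i) ω) inferInstance) (k + 1)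
    (Nat.succ_ne_zero k))
  simp [hρ]

lemma measure_inf'_mem_Ico_le [IsProbabilityMeasure P] (hW : IsStandardBM P W) (f : ℝ → ℝ)
    {σ : ℕ → ℝ} (hσ : Monotone σ) (hσ0 : 0 < σ 0) (n : ℕ) (δ : ℝ) :
    P {ω | (Finset.range (n + 1)).inf' Finset.nonempty_range_add_one
        (fun k ↦ W (σ k) ω - f (σ k)) ∈ Ico 0 δ}
      ≤ ENNReal.ofReal (δ / √(2 * π * σ 0)) := by
  set Z : Ω → ℝ := fun ω ↦ W (σ 0) ω - W 0 ω
  set Y : Ω → ℝ := fun ω ↦ (Finset.range (n + 1)).inf' Finset.nonempty_range_add_one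
    fun k ↦ W (σ k) ω - W (σ 0) ω - f (σ k)
  have hm : incrementSigmaAlgebra W σ ≤ ‹MeasurableSpace Ω› :=
    iSup_le fun k ↦ (hW.measurable_sub _ _).comap_le
  have hYm : Measurable[incrementSigmaAlgebra W σ] Y := by
    have hk (k : ℕ) :
        Measurable[incrementSigmaAlgebra W σ] fun ω ↦ W (σ k) ω - W (σ 0) ω - f (σ k) := by
      have htel : (fun ω ↦ W (σ k) ω - W (σ 0) ω) =
          fun ω ↦ ∑ i ∈ Finset.range k, (W (σ (i + 1)) ω - W (σ i) ω) :=
        funext fun ω ↦ (Finset.sum_range_sub (fun i ↦ W (σ i) ω) k).symm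
      refine Measurable.sub_const ?_ _
      rw [htel]
      exact Finset.measurable_sum _ fun i _ ↦ (comap_measurable _).mono
        (le_iSup (fun i ↦ MeasurableSpace.comap
          (fun ω ↦ W (σ (i + 1)) ω - W (σ i) ω) inferInstance) i) le_rfl
    have hY : Y = (Finset.range (n + 1)).inf' Finset.nonempty_range_add_one
        fun k ω ↦ W (σ k) ω - W (σ 0) ω - f (σ k) :=
      funext fun ω ↦ by rw [Finset.inf'_apply]
    rw [hY]
    exact Finset.inf'_induction _ _ (fun _ h₁ _ h₂ ↦ h₁.inf h₂) fun k _ ↦ hk k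
  have hZY : IndepFun Z Y P := (IndepFun_iff_Indep _ _ _).mpr <|
    indep_of_indep_of_le_right (hW.indep_increments hσ hσ0.le) hYm.comap_le
  have hsplit : ∀ᵐ ω ∂P, (Finset.range (n + 1)).inf' Finset.nonempty_range_add_one
      (fun k ↦ W (σ k) ω - f (σ k)) = Z ω + Y ω := hW.init.mono fun ω hω ↦ by
    have hshift := map_finset_inf' (OrderIso.addLeft (W (σ 0) ω))
      (Finset.nonempty_range_add_one (n := n)) fun k ↦ W (σ k) ω - W (σ 0) ω - f (σ k)
    rw [OrderIso.addLeft_apply] at hshift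
    simp only [Z, Y, hω, sub_zero, hshift]
    refine Finset.inf'_congr _ rfl fun k _ ↦ ?_
    simp only [Function.comp_apply, OrderIso.addLeft_apply]
    ring
  have hlaw := hW.incr_law 0 (σ 0) le_rfl hσ0.le
  rw [sub_zero] at hlaw
  calc _ = P {ω | Z ω + Y ω ∈ Ico 0 δ} :=
        measure_congr <| Filter.eventuallyEq_set.mpr <|
          hsplit.mono fun ω hω ↦ Iff.of_eq (congrArg (· ∈ Ico 0 δ) hω)
    _ ≤ _ := by
        simpa [Real.coe_toNNReal _ hσ0.le] using hZY.measure_add_mem_Ico_le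
          (hW.measurable_sub _ _) (hYm.mono hm le_rfl) (by simpa using hσ0) hlaw 0 δ

lemma measure_isGLB_eq_zero [IsProbabilityMeasure P] (hW : IsStandardBM P W) {f : ℝ → ℝ}
    {h t : ℝ} (hh : 0 < h) (hht : h < t)
    (hrc : ∀ s ∈ Icc h t, ContinuousWithinAt f (Ici s) s) :
    P {ω | IsGLB ((fun s ↦ W s ω - f s) '' Icc h t) 0} = 0 := by
  have hrc' : ∀ᵐ ω ∂P, ∀ s ∈ Icc h t, ContinuousWithinAt (fun s ↦ W s ω - f s) (Ici s) s :=
    hW.cont.mono fun ω hω s hs ↦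
      ((hω s (hh.le.trans hs.1)).mono (Ici_subset_Ici.mpr (hh.le.trans hs.1))).sub (hrc s hs)
  have hbound : ∀ δ > 0, P {ω | IsGLB ((fun s ↦ W s ω - f s) '' Icc h t) 0}
      ≤ ENNReal.ofReal (δ / √(2 * π * h)) := fun δ hδ ↦ by
    refine (measure_mono_ae <| hrc'.mono fun ω hω hglb ↦
      eventually_inf'_gridTime_mem_Ico hht hglb hω hδ).trans <|
      measure_setOf_eventually_le fun N ↦ ?_
    have hN := hW.measure_inf'_mem_Ico_le f (gridTime_monotone hht.le N)
      (by simpa using hh) (N + 1) δ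
    rwa [gridTime_zero] at hN
  have hlim : Tendsto (fun δ ↦ ENNReal.ofReal (δ / √(2 * π * h))) (𝓝[>] 0) (𝓝 0) := by
    rw [← ENNReal.ofReal_zero]
    refine ENNReal.tendsto_ofReal (tendsto_nhdsWithin_of_tendsto_nhds ?_)
    simpa using (continuous_id.div_const (√(2 * π * h))).tendsto 0
  exact le_antisymm (ge_of_tendsto hlim (eventually_nhdsWithin_of_forall hbound)) zero_le

lemma measure_sub_ge_neg_sqrt (hW : IsStandardBM P W) {s u : ℝ} (hs : 0 ≤ s) (hsu : s < u) :
    P {ω | -√(u - s) ≤ W u ω - W s ω} = gaussianReal 0 1 (Ici (-1)) := by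
  have hv : (u - s).toNNReal ≠ 0 := by simpa using hsu
  rw [← gaussianReal_Ici_neg_sqrt hv, ← hW.incr_law s u hs hsu.le,
    Measure.map_apply (hW.measurable_sub s u) measurableSet_Ici,
    Real.coe_toNNReal _ (by linarith)]
  rfl

lemma measure_gt_le (hW : IsStandardBM P W) {s : ℝ} (hs : 0 ≤ s) {c : ℝ} (hc : 0 < c) :
    P {ω | c < W s ω} ≤ ENNReal.ofReal (s / c ^ 2) := by
  have h := gaussianReal_Ioi_le s.toNNReal hc
  rwa [← hW.map_eq hs, Measure.map_apply (hW.meas s) measurableSet_Ioi,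
    Real.coe_toNNReal _ hs] at h

lemma measure_forall_nonneg_le (hW : IsStandardBM P W) {t : ℝ} (ht : 0 < t) (n : ℕ) {K : ℝ}
    (hK : 0 < K) :
    P {ω | ∀ s ∈ Icc 0 t, 0 ≤ W s ω} ≤
      gaussianReal 0 1 (Ici (-1)) ^ n + n * ENNReal.ofReal K⁻¹ := by
  set τ : ℕ → ℝ := fun j ↦ t * (1 + K) ^ j / (1 + K) ^ n
  have hτpos (j : ℕ) : 0 < τ j := by positivity
  have hτmono : Monotone τ := fun j l hjl ↦ by
    simp only [τ]
    gcongr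
    linarith
  have hτle {j : ℕ} (hj : j ≤ n) : τ j ≤ t := by
    simp only [τ]
    rw [div_le_iff₀ (by positivity)]
    gcongr
    linarith
  have hτsucc (j : ℕ) : τ (j + 1) - τ j = K * τ j := by simp only [τ]; ring
  set c : ℕ → ℝ := fun j ↦ √(K * τ j)
  have hincl : {ω | ∀ s ∈ Icc 0 t, 0 ≤ W s ω} ⊆
      (⋂ j ∈ Finset.range n, {ω | -c j ≤ W (τ (j + 1)) ω - W (τ j) ω}) ∪
        ⋃ j ∈ Finset.range n, {ω | c j < W (τ j) ω} := by
    intro ω hω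
    by_cases hlarge : ∃ j ∈ Finset.range n, c j < W (τ j) ω
    · obtain ⟨j, hj, hlt⟩ := hlarge
      exact Or.inr (mem_biUnion hj hlt)
    · push Not at hlarge
      refine Or.inl (mem_iInter₂.mpr fun j hj ↦ ?_)
      have hnonneg := hω (τ (j + 1)) ⟨(hτpos _).le, hτle (Finset.mem_range.mp hj)⟩
      exact show -c j ≤ _ by linarith [hlarge j hj]
  have hprod : P (⋂ j ∈ Finset.range n, {ω | -c j ≤ W (τ (j + 1)) ω - W (τ j) ω}) =
      gaussianReal 0 1 (Ici (-1)) ^ n := by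
    have hj (j : ℕ) :
        P {ω | -c j ≤ W (τ (j + 1)) ω - W (τ j) ω} = gaussianReal 0 1 (Ici (-1)) := by
      simp only [c, ← hτsucc j]
      exact hW.measure_sub_ge_neg_sqrt (hτpos j).le (by linarith [hτsucc j, mul_pos hK (hτpos j)])
    rw [(hW.iIndepFun_increments hτmono (hτpos 0).le).meas_biInter
      (s := fun j ↦ {ω | -c j ≤ W (τ (j + 1)) ω - W (τ j) ω}) fun j _ ↦
        ⟨Ici (-c j), measurableSet_Ici, rfl⟩,
      Finset.prod_congr rfl fun j _ ↦ hj j, Finset.prod_const, Finset.card_range]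
  have htail : P (⋃ j ∈ Finset.range n, {ω | c j < W (τ j) ω}) ≤ n * ENNReal.ofReal K⁻¹ := by
    refine (measure_biUnion_finset_le _ _).trans ?_
    refine (Finset.sum_le_sum fun j _ ↦ hW.measure_gt_le (hτpos j).le
      (sqrt_pos.mpr (mul_pos hK (hτpos j)))).trans_eq ?_
    have hfrac (j : ℕ) : τ j / √(K * τ j) ^ 2 = K⁻¹ := by
      rw [sq_sqrt (mul_pos hK (hτpos j)).le]
      field_simp [(hτpos j).ne']
    simp only [hfrac, Finset.sum_const, Finset.card_range, nsmul_eq_mul]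
  calc _ ≤ _ := measure_mono hincl
    _ ≤ _ := measure_union_le _ _
    _ ≤ _ := add_le_add hprod.le htail

lemma measure_forall_nonneg_eq_zero (hW : IsStandardBM P W) {t : ℝ}
    (ht : 0 < t) : P {ω | ∀ s ∈ Icc 0 t, 0 ≤ W s ω} = 0 := by
  set p := gaussianReal 0 1 (Ici (-1))
  have hpow (n : ℕ) : P {ω | ∀ s ∈ Icc 0 t, 0 ≤ W s ω} ≤ p ^ n := by
    have hlim : Tendsto (fun m : ℕ ↦ p ^ n + n * ENNReal.ofReal (1 / (m + 1))) atTop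
        (𝓝 (p ^ n)) := by
      have h₀ := ENNReal.tendsto_ofReal tendsto_one_div_add_atTop_nhds_zero_nat
      rw [ENNReal.ofReal_zero] at h₀
      simpa using tendsto_const_nhds.add (ENNReal.Tendsto.const_mul h₀ (Or.inr
        (ENNReal.natCast_ne_top n)))
    refine ge_of_tendsto' hlim fun m ↦ ?_
    simpa using hW.measure_forall_nonneg_le ht n (K := m + 1) (by positivity)
  exact le_antisymm (ge_of_tendsto'
    (ENNReal.tendsto_pow_atTop_nhds_zero_of_lt_one gaussianReal_Ici_neg_one_lt_one) hpow) zero_le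

end IsStandardBM

/-- Lemma 4.5: for a standard Brownian motion `W` and a càdlàg
non-decreasing function `f`, the event `{inf_{0 ≤ s ≤ t} (W_s − f_s) = 0}` is negligible for
every `t > 0`. -/
theorem stmt15 {Ω : Type*} [MeasurableSpace Ω] (P : Measure Ω)
    (hP : IsProbabilityMeasure P) (W : ℝ → Ω → ℝ) (hW : IsStandardBM P W)
    (f : ℝ → ℝ) (hmono : MonotoneOn f (Set.Ici (0 : ℝ)))
    (hrc : ∀ t : ℝ, 0 ≤ t → ContinuousWithinAt f (Set.Ici t) t) :
    ∀ t : ℝ, 0 < t →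
      P {ω | sInf ((fun s => W s ω - f s) '' Set.Icc (0 : ℝ) t) = 0} = 0 := by
  intro t ht
  have hnull : P ({ω | ∀ s ∈ Icc 0 t, 0 ≤ W s ω} ∪
      ⋃ n : ℕ, {ω | IsGLB ((fun s ↦ W s ω - f s) '' Icc (t / (n + 2)) t) 0}) = 0 :=
    measure_union_null (hW.measure_forall_nonneg_eq_zero ht) <| measure_iUnion_null fun n ↦
      hW.measure_isGLB_eq_zero (by positivity) (div_lt_self ht (by linarith))
        fun s hs ↦ hrc s (le_trans (by positivity) hs.1)
  refine measure_mono_null_ae ?_ hnull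
  filter_upwards [hW.init, hW.cont] with ω hω0 hωc hinf
  have hglb := isGLB_csInf ⟨_, mem_image_of_mem _ (left_mem_Icc.mpr ht.le)⟩
    (bddBelow_image_sub_of_monotoneOn (hωc.mono Icc_subset_Ici_self)
      (hmono.mono Icc_subset_Ici_self))
  rw [hinf] at hglb
  have hg0 : 0 ≤ W 0 ω - f 0 := hglb.1 ⟨0, left_mem_Icc.mpr ht.le, rfl⟩
  rcases hg0.eq_or_lt with hg0_eq | hg0_pos
  · refine Or.inl fun s hs ↦ ?_
    have hgs : 0 ≤ W s ω - f s := hglb.1 ⟨s, hs, rfl⟩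
    have hfs : f 0 ≤ f s := hmono self_mem_Ici hs.1 hs.1
    linarith
  · exact Or.inr (mem_iUnion.mpr (exists_isGLB_image_Icc_of_pos ht hglb
      ((hωc 0 self_mem_Ici).sub (hrc 0 le_rfl)) hg0_pos))

end
end
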